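/- arXiv:2204.05914 — 2 statements merged into one kernel-verified Lean document; each statement's English description precedes it below -/
import Mathlib

section
/- Let f be a closure operator on a finite set E. Then the Bergman complex Δ(f) is shellable if and only if the augmented Bergman complex Δ̂(f) is shellable. -/
open Finset

/-! ## Simplicial complexes as downward-relevant families of finite faces -/

section Complexes

variable {V : Type*} {W : Type*}

/-- A facet of a complex (given by its set of faces) is a maximal face. -/
def IsFacet (Δ : Set (Finset V)) (s : Finset V) : Prop :=
  s ∈ Δ ∧ ∀ t ∈ Δ, s ⊆ t → s = t

/-- The deletion of a vertex `v`: all faces not containing `v`. -/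
def faceDeletion (Δ : Set (Finset V)) (v : V) : Set (Finset V) :=
  {s ∈ Δ | v ∉ s}

/-- The link of a vertex `v`: faces `τ \ {v}` for `v ∈ τ ∈ Δ`. -/
def faceLink [DecidableEq V] (Δ : Set (Finset V)) (v : V) : Set (Finset V) :=
  {s | v ∉ s ∧ insert v s ∈ Δ}

/-- Vertex decomposability: `Δ` is a simplex (the family of all subsets of one finite
set, including the case `{∅}`), or it has a vertex `v` whose deletion and link are vertex
decomposable and such that every facet of the deletion is a facet of `Δ`. -/
inductive IsVertexDecomposable [DecidableEq V] : Set (Finset V) → Prop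
  | simplex (s : Finset V) : IsVertexDecomposable {t | t ⊆ s}
  | step (Δ : Set (Finset V)) (v : V) :
      {v} ∈ Δ →
      IsVertexDecomposable (faceDeletion Δ v) →
      IsVertexDecomposable (faceLink Δ v) →
      (∀ s, IsFacet (faceDeletion Δ v) s → IsFacet Δ s) →
      IsVertexDecomposable Δ

/-- A family of faces is pure of dimension `d` if it is nonempty and all of its
maximal elements have cardinality `d + 1`. -/
def IsPureDim (Δ : Set (Finset V)) (d : ℤ) : Prop :=
  Δ.Nonempty ∧ ∀ s, IsFacet Δ s → (s.card : ℤ) = d + 1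

/-- `l` is a shelling order of `Δ`: it enumerates the facets of `Δ` without repetition,
and for every `i ≥ 1` the complex `⟨σ₀, …, σ_{i-1}⟩ ∩ ⟨σ_i⟩` is pure of dimension
`dim σ_i - 1 = |σ_i| - 2`. -/
def IsShelling (Δ : Set (Finset V)) (l : List (Finset V)) : Prop :=
  l.Nodup ∧ (∀ s, s ∈ l ↔ IsFacet Δ s) ∧
  ∀ (i : ℕ) (hi : i < l.length), 0 < i →
    IsPureDim ({t | ∃ s ∈ l.take i, t ⊆ s} ∩ {t | t ⊆ l[i]})
      ((l[i].card : ℤ) - 2)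

/-- A complex is shellable if it admits a shelling order of its facets. -/
def Shellable (Δ : Set (Finset V)) : Prop := ∃ l, IsShelling Δ l

/-- The join of two complexes, realized on the sum of the two vertex types. -/
def complexJoin [DecidableEq V] [DecidableEq W]
    (Δ : Set (Finset V)) (Γ : Set (Finset W)) : Set (Finset (V ⊕ W)) :=
  {s | ∃ a ∈ Δ, ∃ b ∈ Γ, s = a.image Sum.inl ∪ b.image Sum.inr}

/-- An isomorphism of simplicial complexes: a vertex map which is injective on every
face and induces a bijection between the two families of faces. -/
def ComplexIso [DecidableEq W] (Δ : Set (Finset V)) (Γ : Set (Finset W)) : Prop :=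
  ∃ φ : V → W,
    (∀ s ∈ Δ, Set.InjOn φ ↑s) ∧
    (∀ s ∈ Δ, s.image φ ∈ Γ) ∧
    (∀ s t, s ∈ Δ → t ∈ Δ → s.image φ = t.image φ → s = t) ∧
    (∀ t ∈ Γ, ∃ s ∈ Δ, s.image φ = t)

/-- The property of appearing as an initial segment: any entry of `l` earlier than an
entry satisfying `P` also satisfies `P`. -/
def PrefixProp {α : Type*} (l : List α) (P : α → Prop) : Prop :=
  ∀ (i j : ℕ) (hi : i < l.length) (hj : j < l.length), i < j → P l[j] → P l[i]

/-- The property of appearing as a final segment: any entry of `l` later than an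
entry satisfying `P` also satisfies `P`. -/
def SuffixProp {α : Type*} (l : List α) (P : α → Prop) : Prop :=
  ∀ (i j : ℕ) (hi : i < l.length) (hj : j < l.length), i < j → P l[i] → P l[j]

/-- `a` appears strictly before `b` in the list `l`. -/
def ListPrec {α : Type*} (l : List α) (a b : α) : Prop :=
  ∃ (i j : ℕ) (hi : i < l.length) (hj : j < l.length), i < j ∧ l[i] = a ∧ l[j] = b

/-- The h-polynomial of a (finite) complex `Δ`, via
`h(Δ,t) = ∑_{s ∈ Δ} t^{|s|} (1-t)^{(d+1)-|s|}` where `d = dim Δ`. -/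
noncomputable def hPoly {V : Type*} [Fintype V] [DecidableEq V]
    (Δ : Set (Finset V)) : Polynomial ℤ :=
  ∑ s ∈ Δ.toFinite.toFinset,
    Polynomial.X ^ s.card *
      (1 - Polynomial.X) ^ (Δ.toFinite.toFinset.sup Finset.card - s.card)

end Complexes

/-! ## Closure operators -/

/-- A closure operator on the finite set `E`. -/
structure ClosureOp (E : Type*) [Fintype E] [DecidableEq E] where
  cl : Finset E → Finset E
  subset_cl : ∀ A, A ⊆ cl A
  cl_mono : ∀ ⦃A B : Finset E⦄, A ⊆ B → cl A ⊆ cl B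
  cl_idem : ∀ A, cl (cl A) = cl A

namespace ClosureOp

variable {E : Type*} [Fintype E] [DecidableEq E]

/-- A flat of `f` is a closed set. -/
def IsFlat (f : ClosureOp E) (F : Finset E) : Prop := f.cl F = F

/-- A proper flat of `f` is a flat different from the whole ground set. -/
def IsProperFlat (f : ClosureOp E) (F : Finset E) : Prop :=
  f.cl F = F ∧ F ≠ Finset.univ

/-- `I` is independent for `f` if removing any of its elements strictly shrinks its
closure. -/
def Indep (f : ClosureOp E) (I : Finset E) : Prop :=
  ∀ i ∈ I, f.cl (I.erase i) ⊂ f.cl I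

/-- A basis is an independent set whose closure is all of `E`. -/
def IsBasis (f : ClosureOp E) (I : Finset E) : Prop :=
  f.Indep I ∧ f.cl I = Finset.univ

/-- The independence complex of `f`: faces are the independent sets. -/
def indepComplex (f : ClosureOp E) : Set (Finset E) := {I | f.Indep I}

/-- The Bergman complex of `f`: faces are chains of proper flats strictly between
`f(∅)` and `E`. A vertex `x_F` is represented by the flat `F` itself. -/
def bergman (f : ClosureOp E) : Set (Finset (Finset E)) :=
  {C | (∀ F ∈ C, f.IsProperFlat F ∧ f.cl ∅ ⊂ F) ∧
       (∀ F ∈ C, ∀ G ∈ C, F ⊆ G ∨ G ⊆ F)}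

/-- The cone over the Bergman complex of `f`: chains of proper flats, where the
bottom flat `f(∅)` is allowed as a member. -/
def coneBergman (f : ClosureOp E) : Set (Finset (Finset E)) :=
  {C | (∀ F ∈ C, f.IsProperFlat F) ∧
       (∀ F ∈ C, ∀ G ∈ C, F ⊆ G ∨ G ⊆ F)}

/-- The augmented Bergman complex of `f`, on the vertex set
`{y_i : i ∈ E} ⊔ {x_F : F a proper flat}`; here `y_i = Sum.inl i` and
`x_F = Sum.inr F`.  Faces consist of an independent set `I` together with a chain of
proper flats all containing `f(I)`. -/
def augBergman (f : ClosureOp E) : Set (Finset (E ⊕ Finset E)) :=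
  {s | ∃ (I : Finset E) (C : Finset (Finset E)),
    s = I.image Sum.inl ∪ C.image Sum.inr ∧
    f.Indep I ∧
    (∀ F ∈ C, f.IsProperFlat F) ∧
    (∀ F ∈ C, ∀ G ∈ C, F ⊆ G ∨ G ⊆ F) ∧
    (∀ F ∈ C, f.cl I ⊆ F)}

/-- An upper-set of proper flats of `f`. -/
def IsFlatUpperSet (f : ClosureOp E) (L : Set (Finset E)) : Prop :=
  (∀ F ∈ L, f.IsProperFlat F) ∧
  ∀ F ∈ L, ∀ F', f.IsProperFlat F' → F ⊆ F' → F' ∈ L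

/-- The induced subcomplex of the augmented Bergman complex on the vertex set
`{y_i : i ∈ E} ⊔ {x_F : F ∈ L}`. -/
def augBergmanOn (f : ClosureOp E) (L : Set (Finset E)) :
    Set (Finset (E ⊕ Finset E)) :=
  {s | s ∈ f.augBergman ∧ ∀ F : Finset E, Sum.inr F ∈ s → F ∈ L}

/-- The restriction `f|_F` of a closure operator to `F`, as a closure operator on the
subtype `{x // x ∈ F}`; when `F` is a flat, `(f|_F)(A) = f(A)`. -/
def restrict (f : ClosureOp E) (F : Finset E) : ClosureOp {x // x ∈ F} where
  cl A := (f.cl (A.image Subtype.val)).subtype (· ∈ F)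
  subset_cl A a ha := by
    rw [Finset.mem_subtype]
    exact f.subset_cl _ (Finset.mem_image_of_mem _ ha)
  cl_mono A B h a ha := by
    rw [Finset.mem_subtype] at *
    exact f.cl_mono (Finset.image_subset_image h) ha
  cl_idem A := by
    have key : ∀ s : Finset E,
        ((s.subtype (· ∈ F)).image Subtype.val) = s.filter (· ∈ F) := by
      intro s
      ext x
      simp [Finset.mem_subtype, Finset.mem_image, Finset.mem_filter, Subtype.exists,
        and_comm]
    ext a
    rw [Finset.mem_subtype, Finset.mem_subtype, key]
    constructor
    · intro hx
      have h1 : f.cl ((f.cl (A.image Subtype.val)).filter (· ∈ F))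
          ⊆ f.cl (A.image Subtype.val) := by
        have := f.cl_mono (Finset.filter_subset (· ∈ F) (f.cl (A.image Subtype.val)))
        rw [f.cl_idem] at this
        exact this
      exact h1 hx
    · intro hx
      refine f.cl_mono ?_ hx
      intro x hxA
      rw [Finset.mem_filter]
      obtain ⟨a', _, rfl⟩ := Finset.mem_image.mp hxA
      exact ⟨f.subset_cl _ hxA, a'.2⟩

/-- The contraction `f/F` of a closure operator by `F`, as a closure operator on the
subtype `{x // x ∉ F}`; it is given by `(f/F)(A) = f(A ∪ F) \ F`. -/
def contract (f : ClosureOp E) (F : Finset E) : ClosureOp {x // x ∉ F} where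
  cl A := (f.cl (A.image Subtype.val ∪ F)).subtype (· ∉ F)
  subset_cl A a ha := by
    rw [Finset.mem_subtype]
    exact f.subset_cl _ (Finset.mem_union_left _ (Finset.mem_image_of_mem _ ha))
  cl_mono A B h a ha := by
    rw [Finset.mem_subtype] at *
    exact f.cl_mono (Finset.union_subset_union_left (Finset.image_subset_image h)) ha
  cl_idem A := by
    have key : ∀ s : Finset E,
        ((s.subtype (· ∉ F)).image Subtype.val) = s.filter (· ∉ F) := by
      intro s
      ext x
      simp [Finset.mem_subtype, Finset.mem_image, Finset.mem_filter, Subtype.exists,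
        and_comm]
    set s := f.cl (A.image Subtype.val ∪ F) with hs
    have hFs : F ⊆ s := fun x hx => f.subset_cl _ (Finset.mem_union_right _ hx)
    have hmain : f.cl ((s.subtype (· ∉ F)).image Subtype.val ∪ F) = s := by
      rw [key]
      apply le_antisymm
      · have h1 : s.filter (· ∉ F) ∪ F ⊆ s :=
          Finset.union_subset (Finset.filter_subset _ _) hFs
        have := f.cl_mono h1
        rw [hs, f.cl_idem] at this
        exact this
      · refine f.cl_mono ?_
        intro x hx
        rcases Finset.mem_union.mp hx with hx' | hx'
        · obtain ⟨a', _, rfl⟩ := Finset.mem_image.mp hx'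
          by_cases hxF : (a' : E) ∈ F
          · exact Finset.mem_union_right _ hxF
          · exact Finset.mem_union_left _
              (Finset.mem_filter.mpr ⟨f.subset_cl _ (Finset.mem_union_left _ hx'), hxF⟩)
        · exact Finset.mem_union_right _ hx'
    ext a
    rw [Finset.mem_subtype, Finset.mem_subtype, hmain]

end ClosureOp

/-! ## Matroids and their closure operators -/

/-- The closure operator (on finsets) of a matroid whose ground set is all of the
finite type `E`. -/
noncomputable def Matroid.closureOp {E : Type*} [Fintype E] [DecidableEq E]
    (M : Matroid E) (hE : M.E = Set.univ) : ClosureOp E where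
  cl A := (M.closure ↑A).toFinite.toFinset
  subset_cl A := by
    intro a ha
    simp only [Set.Finite.mem_toFinset]
    exact M.subset_closure (↑A) (by simp [hE]) ha
  cl_mono A B h := by
    intro a ha
    simp only [Set.Finite.mem_toFinset] at *
    exact M.closure_subset_closure (Finset.coe_subset.mpr h) ha
  cl_idem A := by
    ext a
    simp only [Set.Finite.mem_toFinset, Set.Finite.coe_toFinset]
    rw [M.closure_closure]

/-! ## The flag-to-basis order on facets of the augmented Bergman complex -/

namespace ClosureOp

variable {E : Type*} [Fintype E] [DecidableEq E]

/-- The independent-set part `I` of a face of the augmented Bergman complex. -/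
noncomputable def faceIndep (s : Finset (E ⊕ Finset E)) : Finset E :=
  s.preimage Sum.inl Sum.inl_injective.injOn

/-- The flag part `F_•` of a face of the augmented Bergman complex. -/
noncomputable def faceFlag (s : Finset (E ⊕ Finset E)) : Finset (Finset E) :=
  s.preimage Sum.inr Sum.inr_injective.injOn

/-- The flag part of a facet with its minimal flat `f(I)` removed, regarded as a face
of the Bergman complex of the contraction `f / f(I)`: each flat `G` of the flag is
sent to the flat `G \ f(I)` of the contraction. -/
noncomputable def reducedFlag (f : ClosureOp E) (s : Finset (E ⊕ Finset E)) : Finset (Finset E) :=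
  ((faceFlag s).erase (f.cl (faceIndep s))).image (fun G => G \ f.cl (faceIndep s))

/-- The flag-to-basis order `≺` on facets of the augmented Bergman complex, relative
to a linear extension `r` of the independence complex and a fixed family `sh` of
shellings of the Bergman complexes of the contractions `f/F`.  Facets with nonempty
flag are compared first by `r` on their independent parts, then (for equal independent
parts) by the position of their reduced flags in the fixed shelling `sh (f.cl I)`
(whose faces are mapped down to `Finset E` level by taking images of `Subtype.val`);
facets with empty flag (bases) come after all facets with nonempty flag. -/
def augPrec (f : ClosureOp E) (r : Finset E → Finset E → Prop)
    (sh : (F : Finset E) → List (Finset (Finset {x // x ∉ F})))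
    (s t : Finset (E ⊕ Finset E)) : Prop :=
  ((faceFlag s).Nonempty ∧ (faceFlag t).Nonempty ∧
    (r (faceIndep s) (faceIndep t) ∨
      (faceIndep s = faceIndep t ∧
        ListPrec ((sh (f.cl (faceIndep s))).map
            (fun c => c.image (fun G => G.image Subtype.val)))
          (f.reducedFlag s) (f.reducedFlag t)))) ∨
  ((faceFlag s).Nonempty ∧ faceFlag t = ∅)

end ClosureOp


section ShellTools

variable {V : Type*} [DecidableEq V] {Δ : Set (Finset V)}

theorem exists_facet_superset (hfin : Δ.Finite) {s : Finset V} (hs : s ∈ Δ) :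
    ∃ t, IsFacet Δ t ∧ s ⊆ t := by
  classical
  have hne : (hfin.toFinset.filter (fun t => s ⊆ t)).Nonempty :=
    ⟨s, by simp [hfin.mem_toFinset, hs]⟩
  obtain ⟨t, ht, hmax⟩ := Finset.exists_max_image _ Finset.card hne
  simp only [Finset.mem_filter, Set.Finite.mem_toFinset] at ht
  refine ⟨t, ⟨ht.1, fun u hu htu => ?_⟩, ht.2⟩
  have hu' : u ∈ hfin.toFinset.filter (fun t => s ⊆ t) := by
    simp [hfin.mem_toFinset, hu, ht.2.trans htu]
  exact Finset.eq_of_subset_of_card_le htu (hmax u hu')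

/-- The local criterion for a shelling step. -/
def ShellStep (l : List (Finset V)) : Prop :=
  ∀ (i j : ℕ) (hi : i < l.length) (hj : j < l.length), j < i →
    ∃ (k : ℕ) (hk : k < l.length), k < i ∧ ∃ v ∈ l[i], v ∉ l[j] ∧
      l[i] ∩ l[j] ⊆ l[i].erase v ∧ l[i].erase v ⊆ l[k]

theorem isShelling_iff_crit (Δ : Set (Finset V)) (l : List (Finset V)) :
    IsShelling Δ l ↔ l.Nodup ∧ (∀ s, s ∈ l ↔ IsFacet Δ s) ∧ ShellStep l := by
  constructor
  · rintro ⟨hnd, hfac, hpure⟩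
    refine ⟨hnd, hfac, ?_⟩
    intro i j hi hj hji
    have hpi := hpure i hi (Nat.lt_of_le_of_lt (Nat.zero_le j) hji)
    set X : Set (Finset V) :=
      {t | ∃ s ∈ l.take i, t ⊆ s} ∩ {t | t ⊆ l[i]} with hX
    have hmemj : l[j] ∈ l.take i := by
      rw [List.mem_take_iff_getElem]
      exact ⟨j, by omega, rfl⟩
    have ht0 : l[i] ∩ l[j] ∈ X :=
      ⟨⟨l[j], hmemj, Finset.inter_subset_right⟩, Finset.inter_subset_left⟩
    -- extend to a maximal element of X
    have hXsub : ∀ t ∈ X, t ⊆ l[i] := fun t ht => ht.2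
    have hfinX : X.Finite := Set.Finite.subset (Set.finite_Iic l[i])
      (fun t ht => by simpa using hXsub t ht)
    obtain ⟨t, htX, hts, hmax⟩ :
        ∃ t, t ∈ X ∧ l[i] ∩ l[j] ⊆ t ∧ ∀ u ∈ X, t ⊆ u → t = u := by
      have hne : (hfinX.toFinset.filter (fun t => l[i] ∩ l[j] ⊆ t)).Nonempty :=
        ⟨l[i] ∩ l[j], by simp [hfinX.mem_toFinset, ht0]⟩
      obtain ⟨t, ht, hmax⟩ := Finset.exists_max_image _ Finset.card hne
      simp only [Finset.mem_filter, Set.Finite.mem_toFinset] at ht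
      refine ⟨t, ht.1, ht.2, fun u hu htu => ?_⟩
      exact Finset.eq_of_subset_of_card_le htu
        (hmax u (by simp [hfinX.mem_toFinset, hu, ht.2.trans htu]))
    have htfacet : IsFacet X t := ⟨htX, hmax⟩
    have hcard : (t.card : ℤ) = (l[i].card : ℤ) - 1 := by
      have := hpi.2 t htfacet; omega
    -- t = l[i].erase v for some v
    have htsub : t ⊆ l[i] := htX.2
    have hlt : t.card < l[i].card := by
      have h1 : (0:ℤ) ≤ (t.card : ℤ) := Int.ofNat_nonneg _
      omega
    obtain ⟨v, hv⟩ := Finset.card_eq_one.mp (by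
      rw [Finset.card_sdiff_of_subset htsub]; omega : (l[i] \ t).card = 1)
    have hvmem : v ∈ l[i] ∧ v ∉ t := by
      have : v ∈ l[i] \ t := hv ▸ Finset.mem_singleton_self v
      exact ⟨(Finset.mem_sdiff.mp this).1, (Finset.mem_sdiff.mp this).2⟩
    have hte : t = l[i].erase v := by
      refine Finset.eq_of_subset_of_card_le
        (fun x hx => Finset.mem_erase.mpr ⟨fun he => hvmem.2 (he ▸ hx), htsub hx⟩) ?_
      rw [Finset.card_erase_of_mem hvmem.1]; omega
    obtain ⟨s, hsmem, htsub2⟩ := htX.1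
    obtain ⟨k, hk, hks⟩ := List.mem_take_iff_getElem.mp hsmem
    have hki : k < i := lt_of_lt_of_le hk (min_le_left _ _)
    have hkl : k < l.length := lt_of_lt_of_le hk (min_le_right _ _)
    refine ⟨k, hkl, hki, v, hvmem.1, ?_, ?_, ?_⟩
    · intro hvj
      exact hvmem.2 (hts (Finset.mem_inter.mpr ⟨hvmem.1, hvj⟩))
    · exact hte ▸ hts
    · rw [← hte, hks]
      exact htsub2
  · rintro ⟨hnd, hfac, hstep⟩
    refine ⟨hnd, hfac, ?_⟩
    intro i hi hipos
    constructor
    · exact ⟨∅, ⟨l[0], by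
        rw [List.mem_take_iff_getElem]
        exact ⟨0, by omega, rfl⟩, Finset.empty_subset _⟩, Finset.empty_subset _⟩
    · rintro s ⟨⟨⟨u, humem, hsu⟩, hsi⟩, hmax⟩
      obtain ⟨j, hj, hjs⟩ := List.mem_take_iff_getElem.mp humem
      have hji : j < i := lt_of_lt_of_le hj (min_le_left _ _)
      have hjl : j < l.length := lt_of_lt_of_le hj (min_le_right _ _)
      obtain ⟨k, hkl, hki, v, hvi, hvj, hint, herase⟩ := hstep i j hi hjl hji
      have hse : s ⊆ l[i].erase v := by
        intro x hx
        exact hint (Finset.mem_inter.mpr ⟨hsi hx, hjs ▸ hsu hx⟩)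
      have hmem : l[i].erase v ∈ {t | ∃ s ∈ l.take i, t ⊆ s} ∩ {t | t ⊆ l[i]} := by
        refine ⟨⟨l[k], ?_, herase⟩, Finset.erase_subset _ _⟩
        rw [List.mem_take_iff_getElem]
        exact ⟨k, by omega, rfl⟩
      have := hmax _ hmem hse
      rw [this, Finset.card_erase_of_mem hvi]
      have : 1 ≤ l[i].card := Finset.card_pos.mpr ⟨v, hvi⟩
      push_cast [Nat.cast_sub this]
      ring

end ShellTools

section LinkTools

variable {V : Type*} [DecidableEq V] {Δ : Set (Finset V)}

theorem isFacet_faceLink_iff (hfin : Δ.Finite) (v : V) (s : Finset V) :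
    IsFacet (faceLink Δ v) s ↔ ∃ t, IsFacet Δ t ∧ v ∈ t ∧ s = t.erase v := by
  constructor
  · rintro ⟨⟨hvs, hins⟩, hmax⟩
    obtain ⟨t, htf, hsub⟩ := exists_facet_superset hfin hins
    have hvt : v ∈ t := hsub (Finset.mem_insert_self v s)
    have hmem : t.erase v ∈ faceLink Δ v := by
      refine ⟨Finset.notMem_erase _ _, ?_⟩
      rw [Finset.insert_erase hvt]
      exact htf.1
    have hsse : s ⊆ t.erase v := fun x hx =>
      Finset.mem_erase.mpr ⟨fun he => hvs (he ▸ hx), hsub (Finset.mem_insert_of_mem hx)⟩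
    exact ⟨t, htf, hvt, hmax _ hmem hsse⟩
  · rintro ⟨t, htf, hvt, rfl⟩
    refine ⟨⟨Finset.notMem_erase _ _, by rw [Finset.insert_erase hvt]; exact htf.1⟩, ?_⟩
    rintro u ⟨hvu, hins⟩ hsub
    have : t ⊆ insert v u := by
      conv_lhs => rw [← Finset.insert_erase hvt]
      exact Finset.insert_subset_insert _ hsub
    have ht := htf.2 _ hins this
    rw [ht, Finset.erase_insert hvu]
  
theorem shellable_faceLink (hfin : Δ.Finite) (h : Shellable Δ) (v : V) :
    Shellable (faceLink Δ v) := by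
  classical
  obtain ⟨l, hl⟩ := h
  rw [isShelling_iff_crit] at hl
  obtain ⟨hnd, hfac, hstep⟩ := hl
  set lf : List (Finset V) := l.filter (fun s => v ∈ s) with hlf
  have hsub : lf.Sublist l := List.filter_sublist
  have hmemf : ∀ s ∈ lf, s ∈ l ∧ v ∈ s := by
    intro s hs
    rw [hlf, List.mem_filter] at hs
    exact ⟨hs.1, by simpa using hs.2⟩
  refine ⟨lf.map (fun s => s.erase v), ?_⟩
  rw [isShelling_iff_crit]
  refine ⟨?_, ?_, ?_⟩
  · refine List.Nodup.map_on ?_ (hnd.sublist hsub)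
    intro x hx y hy hxy
    have hxv := (hmemf x hx).2
    have hyv := (hmemf y hy).2
    rw [← Finset.insert_erase hxv, ← Finset.insert_erase hyv, hxy]
  · intro s
    rw [isFacet_faceLink_iff hfin, List.mem_map]
    constructor
    · rintro ⟨t, ht, rfl⟩
      obtain ⟨htl, htv⟩ := hmemf t ht
      exact ⟨t, (hfac t).mp htl, htv, rfl⟩
    · rintro ⟨t, htf, htv, rfl⟩
      refine ⟨t, ?_, rfl⟩
      rw [hlf, List.mem_filter]
      exact ⟨(hfac t).mpr htf, by simpa using htv⟩
  · intro i' j' hi' hj' hji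
    rw [List.length_map] at hi' hj'
    obtain ⟨femb, hfemb⟩ := List.sublist_iff_exists_fin_orderEmbedding_get_eq.mp hsub
    set i := (femb ⟨i', hi'⟩ : ℕ) with hidef
    set j := (femb ⟨j', hj'⟩ : ℕ) with hjdef
    have hil : i < l.length := (femb ⟨i', hi'⟩).2
    have hjl : j < l.length := (femb ⟨j', hj'⟩).2
    have hgi : lf[i'] = l[i] := by
      have := hfemb ⟨i', hi'⟩
      simpa [List.get_eq_getElem] using this
    have hgj : lf[j'] = l[j] := by
      have := hfemb ⟨j', hj'⟩
      simpa [List.get_eq_getElem] using this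
    have hjilt : j < i := by
      have : femb ⟨j', hj'⟩ < femb ⟨i', hi'⟩ := femb.strictMono (by exact hji)
      exact this
    obtain ⟨k, hkl, hki, w, hwi, hwj, hint, hcl⟩ := hstep i j hil hjl hjilt
    have hvi : v ∈ l[i] := by rw [← hgi]; exact (hmemf _ (List.getElem_mem _)).2
    have hvj : v ∈ l[j] := by rw [← hgj]; exact (hmemf _ (List.getElem_mem _)).2
    have hwv : w ≠ v := by
      intro he
      have : v ∈ l[i].erase w := hint (Finset.mem_inter.mpr ⟨hvi, hvj⟩)
      exact (Finset.mem_erase.mp this).1 he.symm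
    have hvk : v ∈ l[k] := hcl (Finset.mem_erase.mpr ⟨fun h => hwv h.symm, hvi⟩)
    have hlkmem : l[k] ∈ lf := by
      rw [hlf, List.mem_filter]
      exact ⟨List.getElem_mem _, by simpa using hvk⟩
    set k' := List.idxOf l[k] lf with hk'def
    have hk'lt : k' < lf.length := List.idxOf_lt_length_iff.mpr hlkmem
    have hgk : lf[k'] = l[k] := List.getElem_idxOf hk'lt
    have hk'i : k' < i' := by
      have h2 : l[(femb ⟨k', hk'lt⟩ : ℕ)]'((femb ⟨k', hk'lt⟩).isLt) = lf[k'] := by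
        simpa [List.get_eq_getElem] using (hfemb ⟨k', hk'lt⟩).symm
      have h3 : (femb ⟨k', hk'lt⟩ : ℕ) = k :=
        (List.Nodup.getElem_inj_iff hnd).mp (h2.trans hgk)
      have : femb ⟨k', hk'lt⟩ < femb ⟨i', hi'⟩ := by
        rw [Fin.lt_iff_val_lt_val, h3, ← hidef]; exact hki
      exact femb.lt_iff_lt.mp this
    refine ⟨k', by rw [List.length_map]; exact hk'lt, hk'i, w, ?_⟩
    simp only [List.getElem_map, hgi, hgj, hgk]
    refine ⟨Finset.mem_erase.mpr ⟨hwv, hwi⟩, fun hc => hwj (Finset.mem_of_mem_erase hc), ?_, ?_⟩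
    · intro x hx
      have hx1 := Finset.mem_erase.mp (Finset.mem_inter.mp hx).1
      have hx2 := Finset.mem_erase.mp (Finset.mem_inter.mp hx).2
      have : x ∈ l[i].erase w := hint (Finset.mem_inter.mpr ⟨hx1.2, hx2.2⟩)
      exact Finset.mem_erase.mpr ⟨(Finset.mem_erase.mp this).1,
        Finset.mem_erase.mpr ⟨hx1.1, hx1.2⟩⟩
    · intro x hx
      obtain ⟨hxw, hx'⟩ := Finset.mem_erase.mp hx
      obtain ⟨hxv, hxi⟩ := Finset.mem_erase.mp hx'
      have : x ∈ l[k] := hcl (Finset.mem_erase.mpr ⟨hxw, hxi⟩)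
      exact Finset.mem_erase.mpr ⟨hxv, this⟩

def linkFace (Δ : Set (Finset V)) (c : Finset V) : Set (Finset V) :=
  {s | Disjoint s c ∧ s ∪ c ∈ Δ}

theorem faceLink_finite (hfin : Δ.Finite) (v : V) : (faceLink Δ v).Finite := by
  refine Set.Finite.subset (hfin.image (fun t => t.erase v)) ?_
  rintro s ⟨hvs, hins⟩
  exact ⟨insert v s, hins, by simp [Finset.erase_insert hvs]⟩

theorem shellable_linkFace (c : Finset V) :
    ∀ (Δ : Set (Finset V)), Δ.Finite → Shellable Δ → Shellable (linkFace Δ c) := by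
  induction c using Finset.induction_on with
  | empty =>
    intro Δ _ h
    have : linkFace Δ ∅ = Δ := by
      ext s; simp [linkFace]
    rw [this]; exact h
  | @insert v c' hvc' ih =>
    intro Δ hfin h
    have heq : linkFace Δ (insert v c') = linkFace (faceLink Δ v) c' := by
      ext s
      simp only [linkFace, faceLink, Set.mem_setOf_eq, Finset.disjoint_insert_right,
        Finset.mem_union, Finset.union_insert]
      constructor
      · rintro ⟨⟨hvs, hd⟩, hm⟩
        exact ⟨hd, ⟨fun hc => by rcases hc with h' | h'; exact hvs h'; exact hvc' h', hm⟩⟩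
      · rintro ⟨hd, ⟨hvsc, hm⟩⟩
        exact ⟨⟨fun hc => hvsc (Or.inl hc), hd⟩, hm⟩
    rw [heq]
    exact ih _ (faceLink_finite hfin v) (shellable_faceLink hfin h v)

theorem shellable_of_image_shellable {W : Type*} [DecidableEq W] (φ : V → W)
    (hφ : Function.Injective φ) (Δ : Set (Finset V))
    (h : Shellable {t | ∃ s ∈ Δ, t = s.image φ}) : Shellable Δ := by
  classical
  set Γ : Set (Finset W) := {t | ∃ s ∈ Δ, t = s.image φ} with hΓ
  have himgfac : ∀ s, IsFacet Δ s ↔ IsFacet Γ (s.image φ) := by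
    intro s
    constructor
    · rintro ⟨hs, hmax⟩
      refine ⟨⟨s, hs, rfl⟩, ?_⟩
      rintro t ⟨u, hu, rfl⟩ hsub
      rw [hmax u hu ((Finset.image_subset_image_iff hφ).mp hsub)]
    · rintro ⟨ht, hmax⟩
      have hs : s ∈ Δ := by
        obtain ⟨u, hu, he⟩ := ht
        rwa [Finset.image_injective hφ he]
      refine ⟨hs, fun u hu hsub => ?_⟩
      have := hmax (u.image φ) ⟨u, hu, rfl⟩ (Finset.image_subset_image hsub)
      exact Finset.image_injective hφ this
  obtain ⟨l', hl'⟩ := h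
  rw [isShelling_iff_crit] at hl'
  obtain ⟨hnd, hfac, hstep⟩ := hl'
  have hpre : ∀ u : Finset V, (u.image φ).preimage φ hφ.injOn = u := by
    intro u
    ext x
    simp [Finset.mem_preimage, Finset.mem_image, hφ.eq_iff]
  have hent : ∀ t ∈ l', (t.preimage φ hφ.injOn).image φ = t := by
    intro t ht
    obtain ⟨⟨u, hu, rfl⟩, _⟩ := (hfac t).mp ht
    rw [hpre]
  refine ⟨l'.map (fun t => t.preimage φ hφ.injOn), ?_⟩
  rw [isShelling_iff_crit]
  refine ⟨?_, ?_, ?_⟩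
  · refine List.Nodup.map_on ?_ hnd
    intro x hx y hy hxy
    rw [← hent x hx, ← hent y hy, hxy]
  · intro s
    rw [List.mem_map, himgfac]
    constructor
    · rintro ⟨t, ht, rfl⟩
      rw [hent t ht]
      exact (hfac t).mp ht
    · intro hf
      refine ⟨s.image φ, (hfac _).mpr hf, ?_⟩
      rw [hpre]
  · intro i j hi hj hji
    rw [List.length_map] at hi hj
    obtain ⟨k, hk, hki, w, hwi, hwj, hint, hcl⟩ := hstep i j hi hj hji
    have hgi := hent _ (List.getElem_mem (l := l') (n := i) hi)
    have hgj := hent _ (List.getElem_mem (l := l') (n := j) hj)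
    have hgk := hent _ (List.getElem_mem (l := l') (n := k) hk)
    obtain ⟨u, hu, hue⟩ : ∃ u ∈ l'[i].preimage φ hφ.injOn, φ u = w := by
      have : w ∈ (l'[i].preimage φ hφ.injOn).image φ := by
        rw [hent _ (List.getElem_mem hi)]; exact hwi
      simpa using Finset.mem_image.mp this
    refine ⟨k, by rw [List.length_map]; exact hk, hki, u, ?_⟩
    simp only [List.getElem_map]
    refine ⟨hu, ?_, ?_, ?_⟩
    · intro hc
      exact hwj (hue ▸ Finset.mem_preimage.mp hc)
    · intro x hx
      obtain ⟨hx1, hx2⟩ := Finset.mem_inter.mp hx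
      have : φ x ∈ l'[i] ∩ l'[j] :=
        Finset.mem_inter.mpr ⟨Finset.mem_preimage.mp hx1, Finset.mem_preimage.mp hx2⟩
      have := hint this
      refine Finset.mem_erase.mpr ⟨?_, hx1⟩
      intro he
      exact (Finset.mem_erase.mp this).1 (he ▸ hue ▸ rfl)
    · intro x hx
      obtain ⟨hxu, hx'⟩ := Finset.mem_erase.mp hx
      have : φ x ∈ l'[i].erase w := by
        refine Finset.mem_erase.mpr ⟨?_, Finset.mem_preimage.mp hx'⟩
        rw [← hue]
        exact fun he => hxu (hφ he)
      exact Finset.mem_preimage.mpr (hcl this)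

end LinkTools


namespace BergAux

open ClosureOp

variable {E : Type*} [Fintype E] [DecidableEq E] (f : ClosureOp E)

theorem subset_flat_iff {F : Finset E} (hF : f.cl F = F) (X : Finset E) :
    f.cl X ⊆ F ↔ X ⊆ F :=
  ⟨fun h => (f.subset_cl X).trans h, fun h => hF ▸ f.cl_mono h⟩

theorem indep_subset {I J : Finset E} (hJ : f.Indep J) (hIJ : I ⊆ J) : f.Indep I := by
  intro i hiI
  have hsub : f.cl (I.erase i) ⊆ f.cl I := f.cl_mono (Finset.erase_subset _ _)
  rw [Finset.ssubset_iff_subset_ne]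
  refine ⟨hsub, fun heq => ?_⟩
  have hi : i ∈ f.cl (I.erase i) := by rw [heq]; exact f.subset_cl I hiI
  have hi2 : i ∈ f.cl (J.erase i) := f.cl_mono (Finset.erase_subset_erase _ hIJ) hi
  have hJsub : J ⊆ f.cl (J.erase i) := by
    intro x hx
    by_cases hxi : x = i
    · exact hxi ▸ hi2
    · exact f.subset_cl _ (Finset.mem_erase.mpr ⟨hxi, hx⟩)
  have hcl : f.cl J ⊆ f.cl (J.erase i) := by
    have h := f.cl_mono hJsub; rwa [f.cl_idem] at h
  exact (hJ i (hIJ hiI)).not_subset hcl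

theorem not_indep_insert {X : Finset E} {b : E} (hb : b ∈ f.cl X) (hbX : b ∉ X) :
    ¬ f.Indep (insert b X) := by
  intro hind
  have h := hind b (Finset.mem_insert_self b X)
  rw [Finset.erase_insert hbX] at h
  have h3 : f.cl (insert b X) ⊆ f.cl X := by
    have := f.cl_mono (Finset.insert_subset hb (f.subset_cl X))
    rwa [f.cl_idem] at this
  exact h.not_subset h3

theorem indep_max_in_closure {I J : Finset E} (hI : f.Indep I) (hJ : f.Indep J)
    (hIJ : I ⊆ J) (hcl : f.cl J ⊆ f.cl I) : I = J := by
  by_contra hne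
  obtain ⟨b, hbJ, hbI⟩ := Finset.exists_of_ssubset (Finset.ssubset_iff_subset_ne.mpr ⟨hIJ, hne⟩)
  have hb : b ∈ f.cl I := hcl (f.subset_cl J hbJ)
  exact not_indep_insert f hb hbI (indep_subset f hJ (Finset.insert_subset hbJ hIJ))

/-- Membership decoding for faces written as `I.image inl ∪ K.image inr`. -/
theorem mem_inl_union_iff (I : Finset E) (K : Finset (Finset E)) (a : E) :
    Sum.inl a ∈ I.image Sum.inl ∪ K.image Sum.inr ↔ a ∈ I := by simp

theorem mem_inr_union_iff (I : Finset E) (K : Finset (Finset E)) (G : Finset E) :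
    Sum.inr G ∈ I.image Sum.inl ∪ K.image Sum.inr ↔ G ∈ K := by simp

theorem faceIndep_union (I : Finset E) (K : Finset (Finset E)) :
    ClosureOp.faceIndep (I.image Sum.inl ∪ K.image Sum.inr) = I := by
  ext a
  simp [ClosureOp.faceIndep, Finset.mem_preimage]

theorem faceFlag_union (I : Finset E) (K : Finset (Finset E)) :
    ClosureOp.faceFlag (I.image Sum.inl ∪ K.image Sum.inr) = K := by
  ext G
  simp [ClosureOp.faceFlag, Finset.mem_preimage]

theorem union_subset_union_iff {I I' : Finset E} {K K' : Finset (Finset E)} :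
    I.image Sum.inl ∪ K.image Sum.inr ⊆ I'.image Sum.inl ∪ K'.image Sum.inr ↔
      I ⊆ I' ∧ K ⊆ K' := by
  constructor
  · intro h
    constructor
    · intro a ha
      exact (mem_inl_union_iff I' K' a).mp (h ((mem_inl_union_iff I K a).mpr ha))
    · intro G hG
      exact (mem_inr_union_iff I' K' G).mp (h ((mem_inr_union_iff I K G).mpr hG))
  · rintro ⟨h1, h2⟩ x hx
    rcases Finset.mem_union.mp hx with hx | hx
    · obtain ⟨a, ha, rfl⟩ := Finset.mem_image.mp hx
      exact Finset.mem_union_left _ (Finset.mem_image_of_mem _ (h1 ha))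
    · obtain ⟨G, hG, rfl⟩ := Finset.mem_image.mp hx
      exact Finset.mem_union_right _ (Finset.mem_image_of_mem _ (h2 hG))

/-- The subcomplex of chains of proper flats strictly above `F`. -/
def bergmanAbove (F : Finset E) : Set (Finset (Finset E)) :=
  {C | (∀ G ∈ C, f.IsProperFlat G ∧ F ⊂ G) ∧ ∀ G ∈ C, ∀ G' ∈ C, G ⊆ G' ∨ G' ⊆ G}

theorem isFacet_bergmanAbove_iff (F : Finset E) (C : Finset (Finset E)) :
    IsFacet (bergmanAbove f F) C ↔ C ∈ bergmanAbove f F ∧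
      ∀ H, f.IsProperFlat H → F ⊂ H → (∀ G ∈ C, H ⊆ G ∨ G ⊆ H) → H ∈ C := by
  constructor
  · rintro ⟨hC, hmax⟩
    refine ⟨hC, fun H hH hFH hcomp => ?_⟩
    have hmem : insert H C ∈ bergmanAbove f F := by
      constructor
      · intro G hG
        rcases Finset.mem_insert.mp hG with rfl | hG
        · exact ⟨hH, hFH⟩
        · exact hC.1 G hG
      · intro G hG G' hG'
        rcases Finset.mem_insert.mp hG with h | h
        · subst h
          rcases Finset.mem_insert.mp hG' with h' | h'
          · rw [h']; exact Or.inl (subset_refl _)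
          · exact hcomp G' h'
        · rcases Finset.mem_insert.mp hG' with h' | h'
          · rw [h']; exact (hcomp G h).symm
          · exact hC.2 G h G' h'
    have := hmax _ hmem (Finset.subset_insert _ _)
    rw [this]
    exact Finset.mem_insert_self _ _
  · rintro ⟨hC, hmax⟩
    refine ⟨hC, fun D hD hsub => ?_⟩
    refine Finset.Subset.antisymm hsub (fun H hH => ?_)
    exact hmax H (hD.1 H hH).1 (hD.1 H hH).2
      (fun G hG => hD.2 H hH G (hsub hG))

theorem bergmanAbove_cl_empty : bergmanAbove f (f.cl ∅) = f.bergman := rfl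

theorem chain_insert {C : Finset (Finset E)} {H : Finset E}
    (hC : ∀ G ∈ C, ∀ G' ∈ C, G ⊆ G' ∨ G' ⊆ G)
    (hcomp : ∀ G ∈ C, H ⊆ G ∨ G ⊆ H) :
    ∀ G ∈ insert H C, ∀ G' ∈ insert H C, G ⊆ G' ∨ G' ⊆ G := by
  intro G hG G' hG'
  rcases Finset.mem_insert.mp hG with h | h
  · subst h
    rcases Finset.mem_insert.mp hG' with h' | h'
    · rw [h']; exact Or.inl (subset_refl _)
    · exact hcomp G' h'
  · rcases Finset.mem_insert.mp hG' with h' | h'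
    · rw [h']; exact (hcomp G h).symm
    · exact hC G h G' h'

theorem cl_empty_proper (hU : f.cl ∅ ≠ Finset.univ) : f.IsProperFlat (f.cl ∅) :=
  ⟨f.cl_idem ∅, hU⟩

theorem exists_linkChain :
    ∀ (n : ℕ) (F : Finset E), F.card ≤ n → f.IsProperFlat F →
    ∃ c : Finset (Finset E), c ∈ f.bergman ∧ (∀ G ∈ c, G ⊆ F) ∧
      (∀ H, f.IsProperFlat H → f.cl ∅ ⊂ H → (∀ G ∈ c, H ⊆ G ∨ G ⊆ H) → H ∉ c → F ⊂ H) := by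
  have base : ∀ F : Finset E, f.IsProperFlat F → F = f.cl ∅ →
      ∃ c : Finset (Finset E), c ∈ f.bergman ∧ (∀ G ∈ c, G ⊆ F) ∧
      (∀ H, f.IsProperFlat H → f.cl ∅ ⊂ H → (∀ G ∈ c, H ⊆ G ∨ G ⊆ H) → H ∉ c → F ⊂ H) := by
    intro F hF hFe
    refine ⟨∅, ⟨fun G hG => absurd hG (Finset.notMem_empty _),
      fun G hG => absurd hG (Finset.notMem_empty _)⟩,
      fun G hG => absurd hG (Finset.notMem_empty _), ?_⟩
    intro H _ hH _ _
    exact hFe ▸ hH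
  intro n
  induction n with
  | zero =>
    intro F hcard hF
    refine base F hF ?_
    have hF0 : F = ∅ := Finset.card_eq_zero.mp (Nat.le_zero.mp hcard)
    have : f.cl ∅ ⊆ F := by
      have := f.cl_mono (Finset.empty_subset F); rwa [hF.1] at this
    rw [hF0] at this ⊢
    exact (Finset.subset_empty.mp this).symm
  | succ n ih =>
    intro F hcard hF
    classical
    by_cases hFe : F = f.cl ∅
    · exact base F hF hFe
    · have hclF : f.cl ∅ ⊆ F := by
        have := f.cl_mono (Finset.empty_subset F); rwa [hF.1] at this
      have hclP : f.IsProperFlat (f.cl ∅) := by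
        refine ⟨f.cl_idem ∅, fun hc => ?_⟩
        rw [hc] at hclF
        exact hF.2 (Finset.univ_subset_iff.mp hclF)
      set S := Finset.univ.filter
        (fun G : Finset E => f.IsProperFlat G ∧ f.cl ∅ ⊆ G ∧ G ⊂ F) with hS
      have hne : S.Nonempty := by
        refine ⟨f.cl ∅, ?_⟩
        rw [hS, Finset.mem_filter]
        exact ⟨Finset.mem_univ _, hclP, subset_refl _,
          Finset.ssubset_iff_subset_ne.mpr ⟨hclF, fun h => hFe h.symm⟩⟩
      obtain ⟨G₀, hG₀, hmax⟩ := Finset.exists_max_image S Finset.card hne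
      rw [hS, Finset.mem_filter] at hG₀
      obtain ⟨-, hG₀P, hG₀cl, hG₀F⟩ := hG₀
      have hcard₀ : G₀.card ≤ n := by
        have := Finset.card_lt_card hG₀F
        omega
      obtain ⟨c₀, hc₀b, hc₀sub, hc₀max⟩ := ih G₀ hcard₀ hG₀P
      refine ⟨insert F c₀, ?_, ?_, ?_⟩
      · constructor
        · intro G hG
          rcases Finset.mem_insert.mp hG with h | h
          · subst h
            refine ⟨hF, Finset.ssubset_iff_subset_ne.mpr ⟨hclF, fun h => hFe h.symm⟩⟩
          · exact hc₀b.1 G h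
        · refine chain_insert hc₀b.2 ?_
          intro G hG
          exact Or.inr ((hc₀sub G hG).trans hG₀F.subset)
      · intro G hG
        rcases Finset.mem_insert.mp hG with h | h
        · exact h ▸ subset_refl _
        · exact (hc₀sub G h).trans hG₀F.subset
      · intro H hHP hHcl hcomp hHmem
        have hHF : H ∉ c₀ := fun hc => hHmem (Finset.mem_insert_of_mem hc)
        have hcomp₀ : ∀ G ∈ c₀, H ⊆ G ∨ G ⊆ H :=
          fun G hG => hcomp G (Finset.mem_insert_of_mem hG)
        have hG₀H : G₀ ⊂ H := hc₀max H hHP hHcl hcomp₀ hHF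
        rcases hcomp F (Finset.mem_insert_self _ _) with h | h
        · -- H ⊆ F : contradiction with maximality of G₀
          exfalso
          have hHS : H ∈ S := by
            rw [hS, Finset.mem_filter]
            refine ⟨Finset.mem_univ _, hHP, hHcl.subset,
              Finset.ssubset_iff_subset_ne.mpr ⟨h, ?_⟩⟩
            intro he
            exact hHmem (he ▸ Finset.mem_insert_self _ _)
          have := hmax H hHS
          exact absurd (Finset.card_lt_card hG₀H) (by omega)
        · refine Finset.ssubset_iff_subset_ne.mpr ⟨h, ?_⟩
          intro he
          exact hHmem (he ▸ Finset.mem_insert_self _ _)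

theorem linkFace_eq_bergmanAbove {F : Finset E} {c : Finset (Finset E)}
    (h1 : c ∈ f.bergman) (h2 : ∀ G ∈ c, G ⊆ F)
    (h4 : ∀ H, f.IsProperFlat H → f.cl ∅ ⊂ H → (∀ G ∈ c, H ⊆ G ∨ G ⊆ H) → H ∉ c → F ⊂ H)
    (hF : f.IsProperFlat F) :
    linkFace f.bergman c = bergmanAbove f F := by
  ext s
  constructor
  · rintro ⟨hdisj, hmem⟩
    constructor
    · intro G hG
      have hGb := hmem.1 G (Finset.mem_union_left _ hG)
      refine ⟨hGb.1, h4 G hGb.1 hGb.2 ?_ ?_⟩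
      · intro G' hG'
        exact hmem.2 G (Finset.mem_union_left _ hG) G' (Finset.mem_union_right _ hG')
      · exact fun hc => (Finset.disjoint_left.mp hdisj hG) hc
    · intro G hG G' hG'
      exact hmem.2 G (Finset.mem_union_left _ hG) G' (Finset.mem_union_left _ hG')
  · rintro ⟨hprop, hchain⟩
    have hdisj : Disjoint s c := by
      rw [Finset.disjoint_left]
      intro G hGs hGc
      exact ((hprop G hGs).2.trans_subset (h2 G hGc)).false
    refine ⟨hdisj, ?_, ?_⟩
    · intro G hG
      rcases Finset.mem_union.mp hG with h | h
      · have hP := hprop G h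
        have hcl : f.cl ∅ ⊆ F := by
          have := f.cl_mono (Finset.empty_subset F); rwa [hF.1] at this
        exact ⟨hP.1, lt_of_le_of_lt hcl hP.2⟩
      · exact h1.1 G h
    · intro G hG G' hG'
      rcases Finset.mem_union.mp hG with h | h <;> rcases Finset.mem_union.mp hG' with h' | h'
      · exact hchain G h G' h'
      · exact Or.inr ((h2 G' h').trans (hprop G h).2.subset)
      · exact Or.inl ((h2 G h).trans (hprop G' h').2.subset)
      · exact h1.2 G h G' h'

theorem shellable_bergmanAbove (h : Shellable f.bergman) {F : Finset E}
    (hF : f.IsProperFlat F) : Shellable (bergmanAbove f F) := by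
  obtain ⟨c, h1, h2, h4⟩ := exists_linkChain f F.card F le_rfl hF
  rw [← linkFace_eq_bergmanAbove f h1 h2 h4 hF]
  exact shellable_linkFace c f.bergman (Set.toFinite _) h

theorem mem_augBergman (I : Finset E) (K : Finset (Finset E)) (hI : f.Indep I)
    (hK1 : ∀ G ∈ K, f.IsProperFlat G) (hK2 : ∀ G ∈ K, ∀ G' ∈ K, G ⊆ G' ∨ G' ⊆ G)
    (hK3 : ∀ G ∈ K, f.cl I ⊆ G) :
    I.image Sum.inl ∪ K.image Sum.inr ∈ f.augBergman :=
  ⟨I, K, rfl, hI, hK1, hK2, hK3⟩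

theorem isFacet_augBergman_iff (σ : Finset (E ⊕ Finset E)) :
    IsFacet f.augBergman σ ↔
      ∃ (I : Finset E) (K : Finset (Finset E)),
        σ = I.image Sum.inl ∪ K.image Sum.inr ∧ f.Indep I ∧
        ((K = ∅ ∧ f.cl I = Finset.univ) ∨
         (f.cl I ∈ K ∧ (∀ G ∈ K, f.IsProperFlat G) ∧
          (∀ G ∈ K, ∀ G' ∈ K, G ⊆ G' ∨ G' ⊆ G) ∧ (∀ G ∈ K, f.cl I ⊆ G) ∧
          (∀ H, f.IsProperFlat H → f.cl I ⊆ H → (∀ G ∈ K, H ⊆ G ∨ G ⊆ H) → H ∈ K))) := by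
  constructor
  · rintro ⟨hmem, hmax⟩
    obtain ⟨I, K, rfl, hI, hK1, hK2, hK3⟩ := hmem
    refine ⟨I, K, rfl, hI, ?_⟩
    by_cases hKe : K = ∅
    · refine Or.inl ⟨hKe, ?_⟩
      by_contra hcl
      have hP : f.IsProperFlat (f.cl I) := ⟨f.cl_idem I, hcl⟩
      have hmem2 : I.image Sum.inl ∪ (insert (f.cl I) K).image Sum.inr ∈ f.augBergman := by
        refine mem_augBergman f I _ hI ?_ ?_ ?_
        · intro G hG
          rcases Finset.mem_insert.mp hG with h | h
          · exact h ▸ hP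
          · exact hK1 G h
        · exact chain_insert hK2 (fun G hG => Or.inl (hK3 G hG))
        · intro G hG
          rcases Finset.mem_insert.mp hG with h | h
          · exact h ▸ subset_refl _
          · exact hK3 G h
      have heq := hmax _ hmem2
        ((union_subset_union_iff).mpr ⟨subset_refl _, Finset.subset_insert _ _⟩)
      have : f.cl I ∈ K := by
        have h2 : Sum.inr (f.cl I) ∈ I.image Sum.inl ∪ K.image Sum.inr := by
          rw [heq]
          exact (mem_inr_union_iff _ _ _).mpr (Finset.mem_insert_self _ _)
        exact (mem_inr_union_iff _ _ _).mp h2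
      rw [hKe] at this
      exact Finset.notMem_empty _ this
    · have hmaxflat : ∀ H, f.IsProperFlat H → f.cl I ⊆ H →
          (∀ G ∈ K, H ⊆ G ∨ G ⊆ H) → H ∈ K := by
        intro H hHP hHcl hcomp
        have hmem2 : I.image Sum.inl ∪ (insert H K).image Sum.inr ∈ f.augBergman := by
          refine mem_augBergman f I _ hI ?_ ?_ ?_
          · intro G hG
            rcases Finset.mem_insert.mp hG with h | h
            · exact h ▸ hHP
            · exact hK1 G h
          · exact chain_insert hK2 hcomp
          · intro G hG
            rcases Finset.mem_insert.mp hG with h | h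
            · exact h ▸ hHcl
            · exact hK3 G h
        have heq := hmax _ hmem2
          ((union_subset_union_iff).mpr ⟨subset_refl _, Finset.subset_insert _ _⟩)
        have h2 : Sum.inr H ∈ I.image Sum.inl ∪ K.image Sum.inr := by
          rw [heq]
          exact (mem_inr_union_iff _ _ _).mpr (Finset.mem_insert_self _ _)
        exact (mem_inr_union_iff _ _ _).mp h2
      obtain ⟨G₀, hG₀⟩ := Finset.nonempty_iff_ne_empty.mpr hKe
      have hclP : f.IsProperFlat (f.cl I) := by
        refine ⟨f.cl_idem I, fun hc => ?_⟩
        exact (hK1 G₀ hG₀).2 (Finset.univ_subset_iff.mp (hc ▸ hK3 G₀ hG₀))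
      exact Or.inr ⟨hmaxflat (f.cl I) hclP (subset_refl _)
          (fun G hG => Or.inl (hK3 G hG)), hK1, hK2, hK3, hmaxflat⟩
  · rintro ⟨I, K, rfl, hI, hcase⟩
    rcases hcase with ⟨hKe, hcl⟩ | ⟨hclK, hK1, hK2, hK3, hmaxflat⟩
    · subst hKe
      refine ⟨mem_augBergman f I ∅ hI (by simp) (by simp) (by simp), ?_⟩
      rintro t ⟨J, L, rfl, hJ, hL1, hL2, hL3⟩ hsub
      obtain ⟨hIJ, hKL⟩ := (union_subset_union_iff).mp hsub
      have hIJ' : I = J :=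
        indep_max_in_closure f hI hJ hIJ (by rw [hcl]; exact Finset.subset_univ _)
      have hLe : L = ∅ := by
        refine Finset.eq_empty_of_forall_notMem (fun G hG => ?_)
        refine (hL1 G hG).2 (Finset.univ_subset_iff.mp ?_)
        have := hL3 G hG
        rw [← hIJ', hcl] at this
        exact this
      rw [hIJ', hLe]
    · refine ⟨mem_augBergman f I K hI hK1 hK2 hK3, ?_⟩
      rintro t ⟨J, L, rfl, hJ, hL1, hL2, hL3⟩ hsub
      obtain ⟨hIJ, hKL⟩ := (union_subset_union_iff).mp hsub
      have hJI : f.cl J ⊆ f.cl I := hL3 _ (hKL hclK)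
      have hIJ' : I = J := indep_max_in_closure f hI hJ hIJ hJI
      have hLK : L = K := by
        refine Finset.Subset.antisymm (fun G hG => ?_) hKL
        refine hmaxflat G (hL1 G hG) ?_ ?_
        · rw [hIJ']; exact hL3 G hG
        · intro G' hG'
          exact hL2 G hG G' (hKL hG')
      rw [hIJ', hLK]

theorem shellable_singleton_empty {V : Type*} [DecidableEq V] :
    Shellable ({(∅ : Finset V)} : Set (Finset V)) := by
  refine ⟨[∅], ?_⟩
  rw [isShelling_iff_crit]
  refine ⟨List.nodup_singleton _, ?_, ?_⟩
  · intro s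
    simp only [List.mem_singleton]
    constructor
    · rintro rfl
      exact ⟨rfl, fun t ht _ => by rw [Set.mem_singleton_iff] at ht; rw [ht]⟩
    · rintro ⟨hs, -⟩
      exact hs
  · intro i j hi hj hji
    simp only [List.length_singleton] at hi
    omega

theorem indep_empty : f.Indep (∅ : Finset E) :=
  fun i hi => absurd hi (Finset.notMem_empty _)

theorem faceLink_augBergman (hU : f.cl ∅ ≠ Finset.univ) :
    faceLink f.augBergman (Sum.inr (f.cl ∅)) =
      {t | ∃ s ∈ f.bergman, t = s.image Sum.inr} := by
  ext s
  constructor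
  · rintro ⟨hvs, hins⟩
    obtain ⟨I, C, heq, hI, h1, h2, h3⟩ := hins
    have hmemv : Sum.inr (f.cl ∅) ∈ I.image Sum.inl ∪ C.image Sum.inr := by
      rw [← heq]; exact Finset.mem_insert_self _ _
    have hclC : f.cl ∅ ∈ C := (mem_inr_union_iff _ _ _).mp hmemv
    have hIe : I = ∅ := by
      refine Finset.eq_empty_of_forall_notMem fun a ha => ?_
      have h4 : f.cl I ⊆ f.cl ∅ := h3 _ hclC
      have h6 : f.cl I ⊆ f.cl (I.erase a) :=
        h4.trans (f.cl_mono (Finset.empty_subset _))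
      exact (hI a ha).not_subset h6
    subst hIe
    rw [Finset.image_empty, Finset.empty_union] at heq
    have hs : s = (C.erase (f.cl ∅)).image Sum.inr := by
      rw [Finset.image_erase Sum.inr_injective, ← heq, Finset.erase_insert hvs]
    refine ⟨C.erase (f.cl ∅), ⟨?_, ?_⟩, hs⟩
    · intro G hG
      obtain ⟨hne, hGC⟩ := Finset.mem_erase.mp hG
      refine ⟨h1 G hGC, Finset.ssubset_iff_subset_ne.mpr ⟨h3 G hGC, fun h => hne h.symm⟩⟩
    · intro G hG G' hG'
      exact h2 G (Finset.mem_of_mem_erase hG) G' (Finset.mem_of_mem_erase hG')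
  · rintro ⟨C, ⟨h1, h2⟩, rfl⟩
    constructor
    · intro hc
      obtain ⟨G, hG, hGe⟩ := Finset.mem_image.mp hc
      rw [Sum.inr_injective hGe] at hG
      exact (h1 _ hG).2.ne rfl
    · have heq : insert (Sum.inr (f.cl ∅)) (C.image Sum.inr) =
          (∅ : Finset E).image Sum.inl ∪ (insert (f.cl ∅) C).image Sum.inr := by
        simp [Finset.image_insert]
      rw [heq]
      refine mem_augBergman f ∅ _ (indep_empty f) ?_ ?_ ?_
      · intro G hG
        rcases Finset.mem_insert.mp hG with h | h
        · exact h ▸ cl_empty_proper f hU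
        · exact (h1 G h).1
      · exact chain_insert h2 (fun G hG => Or.inl (h1 G hG).2.subset)
      · intro G hG
        rcases Finset.mem_insert.mp hG with h | h
        · exact h ▸ subset_refl _
        · exact (h1 G h).2.subset

theorem berg_of_aug (h : Shellable f.augBergman) : Shellable f.bergman := by
  classical
  by_cases hU : f.cl ∅ = Finset.univ
  · have hb : f.bergman = {(∅ : Finset (Finset E))} := by
      ext C
      simp only [ClosureOp.bergman, Set.mem_setOf_eq, Set.mem_singleton_iff]
      constructor
      · rintro ⟨h1, h2⟩
        refine Finset.eq_empty_of_forall_notMem (fun G hG => ?_)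
        obtain ⟨hP, hss⟩ := h1 G hG
        rw [hU] at hss
        exact hP.2 (Finset.univ_subset_iff.mp hss.subset)
      · rintro rfl
        exact ⟨fun G hG => absurd hG (Finset.notMem_empty _),
          fun G hG => absurd hG (Finset.notMem_empty _)⟩
    rw [hb]
    exact shellable_singleton_empty
  · have hlink := shellable_faceLink (Set.toFinite f.augBergman) h (Sum.inr (f.cl ∅))
    rw [faceLink_augBergman f hU] at hlink
    exact shellable_of_image_shellable _ Sum.inr_injective _ hlink

section Construction

variable (lsh : Finset E → List (Finset (Finset E)))

/-- Entries of the flagged part of the shelling list for a given independent set. -/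
noncomputable def entL (I : Finset E) : List (Finset (E ⊕ Finset E)) :=
  (lsh (f.cl I)).map (fun C => I.image Sum.inl ∪ (insert (f.cl I) C).image Sum.inr)

/-- Primary sorting key. -/
noncomputable def keyK (σ : Finset (E ⊕ Finset E)) : ℕ :=
  if ClosureOp.faceFlag σ = ∅ then Fintype.card E
  else (f.cl (ClosureOp.faceIndep σ)).card

/-- Secondary position key. -/
noncomputable def gpK (σ : Finset (E ⊕ Finset E)) : ℕ :=
  List.idxOf ((ClosureOp.faceFlag σ).erase (f.cl (ClosureOp.faceIndep σ)))
    (lsh (f.cl (ClosureOp.faceIndep σ)))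

/-- The order relation along which the shelling list is arranged. -/
def Rrel (σ τ : Finset (E ⊕ Finset E)) : Prop :=
  keyK f σ < keyK f τ ∨
  (keyK f σ = keyK f τ ∧ ClosureOp.faceIndep σ ≠ ClosureOp.faceIndep τ) ∨
  (keyK f σ = keyK f τ ∧ ClosureOp.faceIndep σ = ClosureOp.faceIndep τ ∧
    gpK f lsh σ < gpK f lsh τ)

theorem keyK_union (I : Finset E) (K : Finset (Finset E)) :
    keyK f (I.image Sum.inl ∪ K.image Sum.inr) =
      if K = ∅ then Fintype.card E else (f.cl I).card := by
  rw [keyK, faceFlag_union, faceIndep_union]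

theorem gpK_union (I : Finset E) (K : Finset (Finset E)) :
    gpK f lsh (I.image Sum.inl ∪ K.image Sum.inr) =
      List.idxOf (K.erase (f.cl I)) (lsh (f.cl I)) := by
  rw [gpK, faceFlag_union, faceIndep_union]

theorem Rrel_ne {σ τ : Finset (E ⊕ Finset E)} (h : Rrel f lsh σ τ) : σ ≠ τ := by
  rintro rfl
  rcases h with h | h | h
  · omega
  · exact h.2 rfl
  · omega

theorem flagged_facet {I : Finset E} (hI : f.Indep I) (hP : f.IsProperFlat (f.cl I))
    {D : Finset (Finset E)}
    (hD : IsFacet (bergmanAbove f (f.cl I)) D) :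
    IsFacet f.augBergman (I.image Sum.inl ∪ (insert (f.cl I) D).image Sum.inr) := by
  rw [isFacet_bergmanAbove_iff] at hD
  obtain ⟨⟨hD1, hD2⟩, hDmax⟩ := hD
  rw [isFacet_augBergman_iff]
  refine ⟨I, insert (f.cl I) D, rfl, hI,
    Or.inr ⟨Finset.mem_insert_self _ _, ?_, ?_, ?_, ?_⟩⟩
  · intro G hG
    rcases Finset.mem_insert.mp hG with h | h
    · exact h ▸ hP
    · exact (hD1 G h).1
  · exact chain_insert hD2 (fun G hG => Or.inl (hD1 G hG).2.subset)
  · intro G hG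
    rcases Finset.mem_insert.mp hG with h | h
    · exact h ▸ subset_refl _
    · exact (hD1 G h).2.subset
  · intro H hHP hHcl hcomp
    by_cases hHe : H = f.cl I
    · exact hHe ▸ Finset.mem_insert_self _ _
    · refine Finset.mem_insert_of_mem (hDmax H hHP ?_ ?_)
      · exact Finset.ssubset_iff_subset_ne.mpr ⟨hHcl, fun h => hHe h.symm⟩
      · intro G hG
        exact hcomp G (Finset.mem_insert_of_mem hG)

theorem erase_facet {I : Finset E} {K : Finset (Finset E)}
    (hclK : f.cl I ∈ K) (hK1 : ∀ G ∈ K, f.IsProperFlat G)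
    (hK2 : ∀ G ∈ K, ∀ G' ∈ K, G ⊆ G' ∨ G' ⊆ G) (hK3 : ∀ G ∈ K, f.cl I ⊆ G)
    (hmax : ∀ H, f.IsProperFlat H → f.cl I ⊆ H → (∀ G ∈ K, H ⊆ G ∨ G ⊆ H) → H ∈ K) :
    IsFacet (bergmanAbove f (f.cl I)) (K.erase (f.cl I)) := by
  rw [isFacet_bergmanAbove_iff]
  refine ⟨⟨?_, ?_⟩, ?_⟩
  · intro G hG
    obtain ⟨hne, hGK⟩ := Finset.mem_erase.mp hG
    exact ⟨hK1 G hGK, Finset.ssubset_iff_subset_ne.mpr ⟨hK3 G hGK, fun h => hne h.symm⟩⟩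
  · intro G hG G' hG'
    exact hK2 G (Finset.mem_of_mem_erase hG) G' (Finset.mem_of_mem_erase hG')
  · intro H hHP hFH hcomp
    have hHK : H ∈ K := by
      refine hmax H hHP hFH.subset ?_
      intro G hG
      by_cases hGe : G = f.cl I
      · exact Or.inr (hGe ▸ hFH.subset)
      · exact hcomp G (Finset.mem_erase.mpr ⟨hGe, hG⟩)
    exact Finset.mem_erase.mpr ⟨hFH.ne', hHK⟩

theorem basis_facet {B : Finset E} (hI : f.Indep B) (hcl : f.cl B = Finset.univ) :
    IsFacet f.augBergman (B.image Sum.inl) := by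
  rw [isFacet_augBergman_iff]
  exact ⟨B, ∅, by simp, hI, Or.inl ⟨rfl, hcl⟩⟩

end Construction

theorem pairwise_indexOf_lt {α : Type*} [DecidableEq α] {l : List α} (h : l.Nodup) :
    List.Pairwise (fun a b => List.idxOf a l < List.idxOf b l) l := by
  rw [List.pairwise_iff_getElem]
  intro i j hi hj hij
  rw [(List.Nodup.idxOf_getElem h i hi), (List.Nodup.idxOf_getElem h j hj)]
  exact hij

theorem aug_of_berg (h : Shellable f.bergman) : Shellable f.augBergman := by
  classical
  have hsh : ∀ F : Finset E, ∃ l, f.IsProperFlat F → IsShelling (bergmanAbove f F) l := by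
    intro F
    by_cases hF : f.IsProperFlat F
    · obtain ⟨l, hl⟩ := shellable_bergmanAbove f h hF
      exact ⟨l, fun _ => hl⟩
    · exact ⟨[], fun hc => absurd hc hF⟩
  choose lsh hlsh using hsh
  -- facts about lsh
  have hlshfac : ∀ {F : Finset E}, f.IsProperFlat F →
      ∀ C, C ∈ lsh F ↔ IsFacet (bergmanAbove f F) C := by
    intro F hF
    exact ((isShelling_iff_crit _ _).mp (hlsh F hF)).2.1
  have hlshnd : ∀ {F : Finset E}, f.IsProperFlat F → (lsh F).Nodup := by
    intro F hF
    exact ((isShelling_iff_crit _ _).mp (hlsh F hF)).1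
  have hnotmem : ∀ {F : Finset E}, f.IsProperFlat F → ∀ {C}, C ∈ lsh F → F ∉ C := by
    intro F hF C hC hmem
    have hfac := (hlshfac hF C).mp hC
    exact ((hfac.1.1 F hmem).2).ne rfl
  -- the list
  set bkt : ℕ → List (Finset E) := fun n =>
    (Finset.univ.filter (fun I : Finset E =>
      f.Indep I ∧ (f.cl I).card = n ∧ f.cl I ≠ Finset.univ)).toList with hbkt
  set lflag : List (Finset (E ⊕ Finset E)) :=
    (List.range (Fintype.card E + 1)).flatMap (fun n => (bkt n).flatMap (entL f lsh))
    with hlflag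
  set lbas : List (Finset (E ⊕ Finset E)) :=
    (Finset.univ.filter (fun B : Finset E =>
      f.Indep B ∧ f.cl B = Finset.univ)).toList.map (fun B => B.image Sum.inl) with hlbas
  set L : List (Finset (E ⊕ Finset E)) := lflag ++ lbas with hL
  -- membership decodings
  have hflagmem : ∀ σ, σ ∈ lflag ↔ ∃ I, f.Indep I ∧ f.cl I ≠ Finset.univ ∧
      ∃ C ∈ lsh (f.cl I), σ = I.image Sum.inl ∪ (insert (f.cl I) C).image Sum.inr := by
    intro σ
    rw [hlflag]
    simp only [List.mem_flatMap, List.mem_range, hbkt, Finset.mem_toList,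
      Finset.mem_filter, Finset.mem_univ, true_and, entL, List.mem_map]
    constructor
    · rintro ⟨n, hn, I, ⟨hInd, hcard, hne⟩, C, hC, rfl⟩
      exact ⟨I, hInd, hne, C, hC, rfl⟩
    · rintro ⟨I, hInd, hne, C, hC, rfl⟩
      refine ⟨(f.cl I).card, ?_, I, ⟨hInd, rfl, hne⟩, C, hC, rfl⟩
      have := Finset.card_le_univ (f.cl I)
      omega
  have hbasmem : ∀ σ, σ ∈ lbas ↔ ∃ B, f.Indep B ∧ f.cl B = Finset.univ ∧
      σ = B.image Sum.inl := by
    intro σ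
    rw [hlbas]
    simp only [List.mem_map, Finset.mem_toList, Finset.mem_filter, Finset.mem_univ,
      true_and]
    constructor
    · rintro ⟨B, ⟨h1, h2⟩, rfl⟩
      exact ⟨B, h1, h2, rfl⟩
    · rintro ⟨B, h1, h2, rfl⟩
      exact ⟨B, ⟨h1, h2⟩, rfl⟩
  -- facet characterization of the list
  have hfacets : ∀ σ, σ ∈ L ↔ IsFacet f.augBergman σ := by
    intro σ
    rw [hL, List.mem_append, hflagmem, hbasmem]
    constructor
    · rintro (⟨I, hInd, hne, C, hC, rfl⟩ | ⟨B, h1, h2, rfl⟩)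
      · exact flagged_facet f hInd ⟨f.cl_idem I, hne⟩ ((hlshfac ⟨f.cl_idem I, hne⟩ C).mp hC)
      · exact basis_facet f h1 h2
    · intro hfac
      rw [isFacet_augBergman_iff] at hfac
      obtain ⟨I, K, rfl, hInd, hcase⟩ := hfac
      rcases hcase with ⟨hKe, hclU⟩ | ⟨hclK, hK1, hK2, hK3, hmax⟩
      · refine Or.inr ⟨I, hInd, hclU, ?_⟩
        rw [hKe]
        simp
      · have hP : f.IsProperFlat (f.cl I) := hK1 _ hclK
        refine Or.inl ⟨I, hInd, hP.2, K.erase (f.cl I),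
          (hlshfac hP _).mpr (erase_facet f hclK hK1 hK2 hK3 hmax), ?_⟩
        rw [Finset.insert_erase hclK]
  -- pairwise property of the list
  have hpair : L.Pairwise (Rrel f lsh) := by
    rw [hL, List.pairwise_append]
    refine ⟨?_, ?_, ?_⟩
    · rw [hlflag, List.pairwise_flatMap]
      constructor
      · intro n hn
        rw [List.pairwise_flatMap]
        constructor
        · intro I hI
          rw [hbkt, Finset.mem_toList, Finset.mem_filter] at hI
          obtain ⟨-, hInd, hcard, hne⟩ := hI
          have hP : f.IsProperFlat (f.cl I) := ⟨f.cl_idem I, hne⟩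
          rw [entL, List.pairwise_map]
          refine List.Pairwise.imp_of_mem ?_ (pairwise_indexOf_lt (hlshnd hP))
          intro C D hC hD hlt
          refine Or.inr (Or.inr ⟨?_, ?_, ?_⟩)
          · rw [keyK_union, keyK_union, if_neg (Finset.insert_ne_empty _ _),
              if_neg (Finset.insert_ne_empty _ _)]
          · rw [faceIndep_union, faceIndep_union]
          · rw [gpK_union, gpK_union, Finset.erase_insert (hnotmem hP hC),
              Finset.erase_insert (hnotmem hP hD)]
            exact hlt
        · refine List.Pairwise.imp_of_mem ?_ (Finset.nodup_toList _)
          intro I I' hI hI' hne' x hx y hy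
          rw [Finset.mem_toList, Finset.mem_filter] at hI hI'
          obtain ⟨-, hInd, hcard, hneU⟩ := hI
          obtain ⟨-, hInd', hcard', hneU'⟩ := hI'
          rw [entL, List.mem_map] at hx hy
          obtain ⟨C, hC, rfl⟩ := hx
          obtain ⟨D, hD, rfl⟩ := hy
          refine Or.inr (Or.inl ⟨?_, ?_⟩)
          · rw [keyK_union, keyK_union, if_neg (Finset.insert_ne_empty _ _),
              if_neg (Finset.insert_ne_empty _ _), hcard, hcard']
          · rw [faceIndep_union, faceIndep_union]
            exact hne'
      · refine List.Pairwise.imp_of_mem ?_ (List.pairwise_lt_range (n := _))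
        intro n n' hn hn' hlt x hx y hy
        rw [List.mem_flatMap] at hx hy
        obtain ⟨I, hI, hx⟩ := hx
        obtain ⟨I', hI', hy⟩ := hy
        rw [Finset.mem_toList, Finset.mem_filter] at hI hI'
        rw [entL, List.mem_map] at hx hy
        obtain ⟨C, hC, rfl⟩ := hx
        obtain ⟨D, hD, rfl⟩ := hy
        refine Or.inl ?_
        rw [keyK_union, keyK_union, if_neg (Finset.insert_ne_empty _ _),
          if_neg (Finset.insert_ne_empty _ _), hI.2.2.1, hI'.2.2.1]
        exact hlt
    · rw [hlbas, List.pairwise_map]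
      refine List.Pairwise.imp_of_mem ?_ (Finset.nodup_toList _)
      intro B B' hB hB' hne'
      have he : ∀ B : Finset E, B.image Sum.inl =
          B.image Sum.inl ∪ (∅ : Finset (Finset E)).image Sum.inr := by
        intro B; simp
      refine Or.inr (Or.inl ⟨?_, ?_⟩)
      · rw [he B, he B', keyK_union, keyK_union, if_pos rfl, if_pos rfl]
      · rw [he B, he B', faceIndep_union, faceIndep_union]
        exact hne'
    · intro x hx y hy
      rw [hflagmem] at hx
      rw [hbasmem] at hy
      obtain ⟨I, hInd, hneU, C, hC, rfl⟩ := hx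
      obtain ⟨B, hB1, hB2, rfl⟩ := hy
      have he : B.image Sum.inl =
          B.image Sum.inl ∪ (∅ : Finset (Finset E)).image Sum.inr := by simp
      refine Or.inl ?_
      rw [he, keyK_union, keyK_union, if_neg (Finset.insert_ne_empty _ _), if_pos rfl]
      have hlt : (f.cl I).card < Fintype.card E := by
        have h1 : f.cl I ⊂ Finset.univ :=
          Finset.ssubset_iff_subset_ne.mpr ⟨Finset.subset_univ _, hneU⟩
        have := Finset.card_lt_card h1
        rwa [Finset.card_univ] at this
      exact hlt
  -- nodup
  have hnodupL : L.Nodup := hpair.imp (fun {a b} hr => Rrel_ne f lsh hr)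
  have hcardP : ∀ {F : Finset E}, f.IsProperFlat F → F.card < Fintype.card E := by
    intro F hF
    have h1 : F ⊂ Finset.univ :=
      Finset.ssubset_iff_subset_ne.mpr ⟨Finset.subset_univ _, hF.2⟩
    have := Finset.card_lt_card h1
    rwa [Finset.card_univ] at this
  refine ⟨L, (isShelling_iff_crit _ _).mpr ⟨hnodupL, hfacets, ?_⟩⟩
  have hRgetElem : ∀ (i j : ℕ) (hi : i < L.length) (hj : j < L.length), i < j →
      Rrel f lsh L[i] L[j] :=
    fun i j hi hj hij => List.pairwise_iff_getElem.mp hpair i j hi hj hij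
  have hfind : ∀ (i : ℕ) (hi : i < L.length) (τ : Finset (E ⊕ Finset E)),
      IsFacet f.augBergman τ → τ ≠ L[i] → ¬ Rrel f lsh L[i] τ →
      ∃ (k : ℕ) (hk : k < L.length), k < i ∧ L[k] = τ := by
    intro i hi τ hfac hne hnR
    obtain ⟨k, hk, hek⟩ := List.mem_iff_getElem.mp ((hfacets τ).mpr hfac)
    rcases lt_trichotomy k i with hlt | heq | hgt
    · exact ⟨k, hk, hlt, hek⟩
    · subst heq; exact absurd hek.symm hne
    · have h2 := hRgetElem i k hi hk hgt
      rw [hek] at h2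
      exact absurd h2 hnR
  intro i j hi hj hji
  have hRji : Rrel f lsh L[j] L[i] := hRgetElem j i hj hi hji
  have hne_ij : L[j] ≠ L[i] := fun he =>
    (by omega : ¬ j = i) ((hnodupL.getElem_inj_iff).mp he)
  have hface_i := (hfacets L[i]).mp (List.getElem_mem hi)
  have hface_j := (hfacets L[j]).mp (List.getElem_mem hj)
  rw [isFacet_augBergman_iff] at hface_i hface_j
  obtain ⟨I, K, hσi, hInd, hcase⟩ := hface_i
  obtain ⟨I', K', hσj, hInd', hcase'⟩ := hface_j
  rcases hcase with ⟨hKe, hclU⟩ | ⟨hclK, hK1, hK2, hK3, hmax⟩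
  · -- L[i] is a basis facet
    have hnot : ¬ I ⊆ I' := by
      intro hsub
      rcases hcase' with ⟨hKe', hclU'⟩ | ⟨hclK', hK1', hK2', hK3', hmax'⟩
      · have hne2 : I ≠ I' := by
          intro he
          apply hne_ij
          rw [hσi, hσj, he, hKe, hKe']
        obtain ⟨b, hbI', hbI⟩ :=
          Finset.exists_of_ssubset (Finset.ssubset_iff_subset_ne.mpr ⟨hsub, hne2⟩)
        exact not_indep_insert f (by rw [hclU]; exact Finset.mem_univ b) hbI
          (indep_subset f hInd' (Finset.insert_subset hbI' hsub)) 
      · have hP' : f.IsProperFlat (f.cl I') := hK1' _ hclK'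
        exact hP'.2 (Finset.univ_subset_iff.mp (by rw [← hclU]; exact f.cl_mono hsub))
    obtain ⟨a, haI, haI'⟩ := Finset.not_subset.mp hnot
    have hF₀P : f.IsProperFlat (f.cl (I.erase a)) := by
      refine ⟨f.cl_idem _, ?_⟩
      have hss := hInd a haI
      rw [hclU] at hss
      exact hss.ne
    have hEmem : (∅ : Finset (Finset E)) ∈ bergmanAbove f (f.cl (I.erase a)) := by
      constructor
      · intro G hG; exact absurd hG (Finset.notMem_empty _)
      · intro G hG; exact absurd hG (Finset.notMem_empty _)
    obtain ⟨D, hDfac, -⟩ := exists_facet_superset (Set.toFinite _) hEmem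
    have hkfac : IsFacet f.augBergman
        ((I.erase a).image Sum.inl ∪ (insert (f.cl (I.erase a)) D).image Sum.inr) :=
      flagged_facet f (indep_subset f hInd (Finset.erase_subset _ _)) hF₀P hDfac
    have hkey_i : keyK f L[i] = Fintype.card E := by
      rw [hσi, keyK_union, if_pos hKe]
    have hkey_k : keyK f ((I.erase a).image Sum.inl ∪
        (insert (f.cl (I.erase a)) D).image Sum.inr) = (f.cl (I.erase a)).card := by
      rw [keyK_union, if_neg (Finset.insert_ne_empty _ _)]
    have hlt : (f.cl (I.erase a)).card < Fintype.card E := hcardP hF₀P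
    have hnR : ¬ Rrel f lsh L[i] ((I.erase a).image Sum.inl ∪
        (insert (f.cl (I.erase a)) D).image Sum.inr) := by
      rintro (h1 | h2 | h3)
      · rw [hkey_i, hkey_k] at h1; omega
      · obtain ⟨h2a, -⟩ := h2; rw [hkey_i, hkey_k] at h2a; omega
      · obtain ⟨h3a, -⟩ := h3; rw [hkey_i, hkey_k] at h3a; omega
    have hneq : (I.erase a).image Sum.inl ∪
        (insert (f.cl (I.erase a)) D).image Sum.inr ≠ L[i] := by
      intro he
      have h2 := congrArg ClosureOp.faceFlag he
      rw [faceFlag_union, hσi, faceFlag_union, hKe] at h2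
      exact Finset.insert_ne_empty _ _ h2
    obtain ⟨k, hk, hki, hLk⟩ := hfind i hi _ hkfac hneq hnR
    refine ⟨k, hk, hki, Sum.inl a, ?_, ?_, ?_, ?_⟩
    · rw [hσi]; exact (mem_inl_union_iff _ _ _).mpr haI
    · rw [hσj]; intro hc; exact haI' ((mem_inl_union_iff _ _ _).mp hc)
    · intro x hx
      obtain ⟨hx1, hx2⟩ := Finset.mem_inter.mp hx
      refine Finset.mem_erase.mpr ⟨?_, hx1⟩
      rintro rfl
      rw [hσj] at hx2
      exact haI' ((mem_inl_union_iff _ _ _).mp hx2)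
    · intro x hx
      obtain ⟨hxne, hxi⟩ := Finset.mem_erase.mp hx
      rw [hσi] at hxi
      rw [hLk]
      rcases x with b | G
      · have hbI : b ∈ I := (mem_inl_union_iff _ _ _).mp hxi
        have hba : b ≠ a := fun he => hxne (by rw [he])
        exact (mem_inl_union_iff _ _ _).mpr (Finset.mem_erase.mpr ⟨hba, hbI⟩)
      · have hGK : G ∈ K := (mem_inr_union_iff _ _ _).mp hxi
        rw [hKe] at hGK
        exact absurd hGK (Finset.notMem_empty _)
  · -- L[i] is a flagged facet
    have hFP : f.IsProperFlat (f.cl I) := hK1 _ hclK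
    by_cases hII' : I' = I
    · subst hII'
      rcases hcase' with ⟨hKe', hclU'⟩ | ⟨hclK', hK1', hK2', hK3', hmax'⟩
      · exact absurd hclU' hFP.2
      · have hKne : K' ≠ K := by
          intro he; apply hne_ij; rw [hσi, hσj, he]
        have hkey_j : keyK f L[j] = (f.cl I').card := by
          rw [hσj, keyK_union, if_neg (Finset.ne_empty_of_mem hclK')]
        have hkey_i : keyK f L[i] = (f.cl I').card := by
          rw [hσi, keyK_union, if_neg (Finset.ne_empty_of_mem hclK)]
        have hgpj : gpK f lsh L[j] =
            List.idxOf (K'.erase (f.cl I')) (lsh (f.cl I')) := by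
          rw [hσj, gpK_union]
        have hgpi : gpK f lsh L[i] =
            List.idxOf (K.erase (f.cl I')) (lsh (f.cl I')) := by
          rw [hσi, gpK_union]
        have hgp : gpK f lsh L[j] < gpK f lsh L[i] := by
          rcases hRji with h1 | h2 | h3
          · rw [hkey_j, hkey_i] at h1; omega
          · exfalso
            apply h2.2
            rw [hσi, hσj, faceIndep_union, faceIndep_union]
          · exact h3.2.2
        have hClsh : K.erase (f.cl I') ∈ lsh (f.cl I') :=
          (hlshfac hFP _).mpr (erase_facet f hclK hK1 hK2 hK3 hmax)
        have hC'lsh : K'.erase (f.cl I') ∈ lsh (f.cl I') :=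
          (hlshfac hFP _).mpr (erase_facet f hclK' hK1' hK2' hK3' hmax')
        have hp : List.idxOf (K.erase (f.cl I')) (lsh (f.cl I')) <
            (lsh (f.cl I')).length := List.idxOf_lt_length_iff.mpr hClsh
        have hq : List.idxOf (K'.erase (f.cl I')) (lsh (f.cl I')) <
            (lsh (f.cl I')).length := List.idxOf_lt_length_iff.mpr hC'lsh
        have hqp : List.idxOf (K'.erase (f.cl I')) (lsh (f.cl I')) <
            List.idxOf (K.erase (f.cl I')) (lsh (f.cl I')) := by
          rw [← hgpj, ← hgpi]; exact hgp
        have stepF := ((isShelling_iff_crit _ _).mp (hlsh _ hFP)).2.2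
        obtain ⟨k₀, hk₀len, hk₀p, G, hG1, hG2, hint, hsubD⟩ :=
          stepF _ _ hp hq hqp
        have hgetp : (lsh (f.cl I'))[List.idxOf (K.erase (f.cl I')) (lsh (f.cl I'))]'hp
            = K.erase (f.cl I') := List.getElem_idxOf hp
        have hgetq : (lsh (f.cl I'))[List.idxOf (K'.erase (f.cl I')) (lsh (f.cl I'))]'hq
            = K'.erase (f.cl I') := List.getElem_idxOf hq
        rw [hgetp] at hG1 hint hsubD
        rw [hgetq] at hG2 hint
        set D : Finset (Finset E) := (lsh (f.cl I'))[k₀]'hk₀len with hD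
        have hDlsh : D ∈ lsh (f.cl I') := by rw [hD]; exact List.getElem_mem hk₀len
        have hDfac := (hlshfac hFP _).mp hDlsh
        have hFnotD : f.cl I' ∉ D := hnotmem hFP hDlsh
        have hkfac : IsFacet f.augBergman
            (I'.image Sum.inl ∪ (insert (f.cl I') D).image Sum.inr) :=
          flagged_facet f hInd hFP hDfac
        have hidxD : List.idxOf D (lsh (f.cl I')) = k₀ := by
          rw [hD]; exact List.Nodup.idxOf_getElem (hlshnd hFP) _ _
        have hneq : I'.image Sum.inl ∪ (insert (f.cl I') D).image Sum.inr ≠ L[i] := by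
          intro he
          have h2 := congrArg ClosureOp.faceFlag he
          rw [faceFlag_union, hσi, faceFlag_union] at h2
          have hDe : D = K.erase (f.cl I') := by
            rw [← h2, Finset.erase_insert hFnotD]
          rw [hDe] at hidxD
          omega
        have hnR : ¬ Rrel f lsh L[i]
            (I'.image Sum.inl ∪ (insert (f.cl I') D).image Sum.inr) := by
          have hkey_k : keyK f (I'.image Sum.inl ∪ (insert (f.cl I') D).image Sum.inr)
              = (f.cl I').card := by
            rw [keyK_union, if_neg (Finset.insert_ne_empty _ _)]
          have hgpk : gpK f lsh (I'.image Sum.inl ∪ (insert (f.cl I') D).image Sum.inr)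
              = k₀ := by
            rw [gpK_union, Finset.erase_insert hFnotD]
            exact hidxD
          rintro (h1 | h2 | h3)
          · rw [hkey_i, hkey_k] at h1; omega
          · apply h2.2
            rw [hσi, faceIndep_union, faceIndep_union]
          · obtain ⟨-, -, h3c⟩ := h3
            rw [hgpi, hgpk] at h3c
            omega
        obtain ⟨k, hk, hki, hLk⟩ := hfind i hi _ hkfac hneq hnR
        have hGK : G ∈ K := Finset.mem_of_mem_erase hG1
        have hGne : G ≠ f.cl I' := (Finset.mem_erase.mp hG1).1
        refine ⟨k, hk, hki, Sum.inr G, ?_, ?_, ?_, ?_⟩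
        · rw [hσi]; exact (mem_inr_union_iff _ _ _).mpr hGK
        · rw [hσj]
          intro hc
          exact hG2 (Finset.mem_erase.mpr ⟨hGne, (mem_inr_union_iff _ _ _).mp hc⟩)
        · intro x hx
          obtain ⟨hx1, hx2⟩ := Finset.mem_inter.mp hx
          refine Finset.mem_erase.mpr ⟨?_, hx1⟩
          rintro rfl
          rw [hσj] at hx2
          exact hG2 (Finset.mem_erase.mpr ⟨hGne, (mem_inr_union_iff _ _ _).mp hx2⟩)
        · intro x hx
          obtain ⟨hxne, hxi⟩ := Finset.mem_erase.mp hx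
          rw [hσi] at hxi
          rw [hLk]
          rcases x with b | H
          · exact (mem_inl_union_iff _ _ _).mpr ((mem_inl_union_iff _ _ _).mp hxi)
          · have hHK : H ∈ K := (mem_inr_union_iff _ _ _).mp hxi
            have hHG : H ≠ G := fun he => hxne (by rw [he])
            refine (mem_inr_union_iff _ _ _).mpr ?_
            by_cases hHF : H = f.cl I'
            · exact hHF ▸ Finset.mem_insert_self _ _
            · exact Finset.mem_insert_of_mem
                (hsubD (Finset.mem_erase.mpr ⟨hHG, Finset.mem_erase.mpr ⟨hHF, hHK⟩⟩))
    · -- different independent parts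
      have hkey_i : keyK f L[i] = (f.cl I).card := by
        rw [hσi, keyK_union, if_neg (Finset.ne_empty_of_mem hclK)]
      have hnot : ¬ I ⊆ I' := by
        intro hsub
        rcases hcase' with ⟨hKe', hclU'⟩ | ⟨hclK', hK1', hK2', hK3', hmax'⟩
        · have hkey_j : keyK f L[j] = Fintype.card E := by
            rw [hσj, keyK_union, if_pos hKe']
          have hlt : (f.cl I).card < Fintype.card E := hcardP hFP
          rcases hRji with h1 | h2 | h3
          · rw [hkey_j, hkey_i] at h1; omega
          · obtain ⟨h2a, -⟩ := h2; rw [hkey_j, hkey_i] at h2a; omega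
          · obtain ⟨h3a, -⟩ := h3; rw [hkey_j, hkey_i] at h3a; omega
        · have hkey_j : keyK f L[j] = (f.cl I').card := by
            rw [hσj, keyK_union, if_neg (Finset.ne_empty_of_mem hclK')]
          have hsubcl : f.cl I ⊆ f.cl I' := f.cl_mono hsub
          have hle : (f.cl I').card ≤ (f.cl I).card := by
            rcases hRji with h1 | h2 | h3
            · rw [hkey_j, hkey_i] at h1; omega
            · obtain ⟨h2a, -⟩ := h2; rw [hkey_j, hkey_i] at h2a; omega
            · obtain ⟨h3a, -⟩ := h3; rw [hkey_j, hkey_i] at h3a; omega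
          have hcleq : f.cl I = f.cl I' := Finset.eq_of_subset_of_card_le hsubcl hle
          have hne2 : I ≠ I' := fun he => hII' he.symm
          obtain ⟨b, hbI', hbI⟩ :=
            Finset.exists_of_ssubset (Finset.ssubset_iff_subset_ne.mpr ⟨hsub, hne2⟩)
          exact not_indep_insert f
            (show b ∈ f.cl I from hcleq ▸ (f.subset_cl I' hbI')) hbI
            (indep_subset f hInd' (Finset.insert_subset hbI' hsub))
      obtain ⟨a, haI, haI'⟩ := Finset.not_subset.mp hnot
      have hss := hInd a haI
      have hF₀P : f.IsProperFlat (f.cl (I.erase a)) := by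
        refine ⟨f.cl_idem _, fun he => ?_⟩
        exact hFP.2 (Finset.univ_subset_iff.mp (he ▸ hss.subset))
      have hKmem : K ∈ bergmanAbove f (f.cl (I.erase a)) :=
        ⟨fun G hG => ⟨hK1 G hG, lt_of_lt_of_le hss (hK3 G hG)⟩, hK2⟩
      obtain ⟨D, hDfac, hKD⟩ := exists_facet_superset (Set.toFinite _) hKmem
      have hkfac : IsFacet f.augBergman
          ((I.erase a).image Sum.inl ∪ (insert (f.cl (I.erase a)) D).image Sum.inr) :=
        flagged_facet f (indep_subset f hInd (Finset.erase_subset _ _)) hF₀P hDfac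
      have hkey_k : keyK f ((I.erase a).image Sum.inl ∪
          (insert (f.cl (I.erase a)) D).image Sum.inr) = (f.cl (I.erase a)).card := by
        rw [keyK_union, if_neg (Finset.insert_ne_empty _ _)]
      have hcardlt : (f.cl (I.erase a)).card < (f.cl I).card := Finset.card_lt_card hss
      have hnR : ¬ Rrel f lsh L[i] ((I.erase a).image Sum.inl ∪
          (insert (f.cl (I.erase a)) D).image Sum.inr) := by
        rintro (h1 | h2 | h3)
        · rw [hkey_i, hkey_k] at h1; omega
        · obtain ⟨h2a, -⟩ := h2; rw [hkey_i, hkey_k] at h2a; omega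
        · obtain ⟨h3a, -⟩ := h3; rw [hkey_i, hkey_k] at h3a; omega
      have hneq : (I.erase a).image Sum.inl ∪
          (insert (f.cl (I.erase a)) D).image Sum.inr ≠ L[i] := by
        intro he
        have h2 := congrArg ClosureOp.faceIndep he
        rw [faceIndep_union, hσi, faceIndep_union] at h2
        exact (Finset.erase_eq_self.mp h2) haI
      obtain ⟨k, hk, hki, hLk⟩ := hfind i hi _ hkfac hneq hnR
      refine ⟨k, hk, hki, Sum.inl a, ?_, ?_, ?_, ?_⟩
      · rw [hσi]; exact (mem_inl_union_iff _ _ _).mpr haI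
      · rw [hσj]; intro hc; exact haI' ((mem_inl_union_iff _ _ _).mp hc)
      · intro x hx
        obtain ⟨hx1, hx2⟩ := Finset.mem_inter.mp hx
        refine Finset.mem_erase.mpr ⟨?_, hx1⟩
        rintro rfl
        rw [hσj] at hx2
        exact haI' ((mem_inl_union_iff _ _ _).mp hx2)
      · intro x hx
        obtain ⟨hxne, hxi⟩ := Finset.mem_erase.mp hx
        rw [hσi] at hxi
        rw [hLk]
        rcases x with b | H
        · have hbI : b ∈ I := (mem_inl_union_iff _ _ _).mp hxi
          have hba : b ≠ a := fun he => hxne (by rw [he])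
          exact (mem_inl_union_iff _ _ _).mpr (Finset.mem_erase.mpr ⟨hba, hbI⟩)
        · have hHK : H ∈ K := (mem_inr_union_iff _ _ _).mp hxi
          exact (mem_inr_union_iff _ _ _).mpr (Finset.mem_insert_of_mem (hKD hHK))

end BergAux

/-- For any closure operator `f` on a finite set, the Bergman complex
`Δ(f)` is shellable if and only if the augmented Bergman complex `Δ̂(f)` is shellable. -/
theorem bergman_shellable_iff_augBergman_shellable
    {E : Type*} [Fintype E] [DecidableEq E] (f : ClosureOp E) :
    Shellable f.bergman ↔ Shellable f.augBergman :=
  ⟨BergAux.aug_of_berg f, BergAux.berg_of_aug f⟩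
end

section
/- Let f be a closure operator on a finite set E. If the Bergman complex Δ(f) is shellable, then for every proper flat F of f the Bergman complex Δ(f/F) of the contraction f/F is shellable. -/
open Finset

/-! ## Auxiliary lemmas for the proof -/

section ShellAux

variable {V : Type*} {W : Type*}

lemma exists_facet_above [Fintype V] (Δ : Set (Finset V)) {t : Finset V} (ht : t ∈ Δ) :
    ∃ s, t ⊆ s ∧ IsFacet Δ s := by
  classical
  obtain ⟨s, hs, hmax⟩ := Finset.exists_max_image (Set.toFinite {s | s ∈ Δ ∧ t ⊆ s}).toFinset
    Finset.card ⟨t, by simp [Set.Finite.mem_toFinset, ht]⟩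
  rw [Set.Finite.mem_toFinset] at hs
  refine ⟨s, hs.2, hs.1, fun u hu hsu => ?_⟩
  exact Finset.eq_of_subset_of_card_le hsu
    (hmax u (by rw [Set.Finite.mem_toFinset]; exact ⟨hu, hs.2.trans hsu⟩))

lemma take_filter_eq {α : Type*} {l : List α} {b : α → Bool} (hl : l.Nodup)
    {p i : ℕ} (hp : p < l.length) (hq : b l[p] = true) (hi : i < (l.filter b).length)
    (heq : (l.filter b)[i] = l[p]) :
    (l.filter b).take i = (l.take p).filter b := by
  have h1 : l = l.take p ++ l[p] :: l.drop (p + 1) := by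
    conv_lhs => rw [← List.take_append_drop p l, List.drop_eq_getElem_cons hp]
  have h2 : l.filter b = (l.take p).filter b ++ l[p] :: (l.drop (p + 1)).filter b := by
    conv_lhs => rw [h1]
    rw [List.filter_append, List.filter_cons_of_pos hq]
  have hA : ((l.take p).filter b).length < (l.filter b).length := by
    rw [h2, List.length_append, List.length_cons]; omega
  have h3 : (l.filter b)[((l.take p).filter b).length]'hA = l[p] := by
    have := List.getElem_append_right (as := (l.take p).filter b)
      (bs := l[p] :: (l.drop (p + 1)).filter b) (i := ((l.take p).filter b).length)
      (le_refl _) (h₂ := by rw [← h2]; exact hA)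
    simpa [h2] using this
  have hieq : i = ((l.take p).filter b).length :=
    (hl.filter b).getElem_inj_iff.mp (heq.trans h3.symm)
  subst hieq
  rw [h2, List.take_left]

lemma getElem_zero_mem_take {α : Type*} (L : List α) {i : ℕ} (hi : i < L.length) (h0 : 0 < i) :
    L[0]'(by omega) ∈ L.take i := by
  have h : 0 < (L.take i).length := by
    rw [List.length_take]; omega
  have h4 : (L.take i)[0]'h = L[0]'(by omega) := List.getElem_take
  rw [← h4]; exact List.getElem_mem h

lemma shellable_link [Fintype V] [DecidableEq V] (Δ : Set (Finset V)) (σ : Finset V)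
    (h : Shellable Δ) :
    Shellable {t : Finset V | Disjoint t σ ∧ t ∪ σ ∈ Δ} := by
  classical
  set Λ : Set (Finset V) := {t : Finset V | Disjoint t σ ∧ t ∪ σ ∈ Δ} with hΛ
  obtain ⟨l, hnd, hmem, hpure⟩ := h
  set b : Finset V → Bool := fun s => decide (σ ⊆ s) with hb
  set l₀ : List (Finset V) := l.filter b with hl₀
  have hl₀mem : ∀ s, s ∈ l₀ ↔ s ∈ l ∧ σ ⊆ s := by
    intro s; simp [hl₀, List.mem_filter, hb]
  have hfacΛ : ∀ u, IsFacet Δ u → σ ⊆ u → IsFacet Λ (u \ σ) := by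
    intro u hu hσu
    constructor
    · exact ⟨Finset.sdiff_disjoint, by rw [Finset.sdiff_union_of_subset hσu]; exact hu.1⟩
    · intro t ht hsub
      have h1 : u ⊆ t ∪ σ := by
        conv_lhs => rw [← Finset.sdiff_union_of_subset hσu]
        exact Finset.union_subset_union_left hsub
      have h2 : u = t ∪ σ := hu.2 _ ht.2 h1
      have h3 : t ⊆ u \ σ := Finset.subset_sdiff.2 ⟨h2 ▸ Finset.subset_union_left, ht.1⟩
      exact Finset.Subset.antisymm hsub h3
  have hfacΔ : ∀ s, IsFacet Λ s → IsFacet Δ (s ∪ σ) ∧ Disjoint s σ := by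
    intro s hs
    have hsΛ : Disjoint s σ ∧ s ∪ σ ∈ Δ := hs.1
    obtain ⟨v, hv1, hv2⟩ := exists_facet_above Δ hsΛ.2
    have hσv : σ ⊆ v := Finset.subset_union_right.trans hv1
    have hvΛ : v \ σ ∈ Λ :=
      ⟨Finset.sdiff_disjoint, by rw [Finset.sdiff_union_of_subset hσv]; exact hv2.1⟩
    have hsv : s ⊆ v \ σ := Finset.subset_sdiff.2 ⟨Finset.subset_union_left.trans hv1, hsΛ.1⟩
    have heq : s = v \ σ := hs.2 _ hvΛ hsv
    have heq2 : s ∪ σ = v := by rw [heq, Finset.sdiff_union_of_subset hσv]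
    exact ⟨heq2 ▸ hv2, hsΛ.1⟩
  refine ⟨l₀.map (· \ σ), ?_, ?_, ?_⟩
  · refine List.Nodup.map_on ?_ (hnd.filter b)
    intro x hx y hy hxy
    rw [hl₀mem] at hx hy
    rw [← Finset.sdiff_union_of_subset hx.2, ← Finset.sdiff_union_of_subset hy.2, hxy]
  · intro s
    constructor
    · intro hs
      obtain ⟨u, hu, rfl⟩ := List.mem_map.1 hs
      rw [hl₀mem] at hu
      exact hfacΛ u ((hmem u).1 hu.1) hu.2
    · intro hs
      obtain ⟨hfac, hdisj⟩ := hfacΔ s hs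
      refine List.mem_map.2 ⟨s ∪ σ, (hl₀mem _).2 ⟨(hmem _).2 hfac, Finset.subset_union_right⟩, ?_⟩
      exact Finset.union_sdiff_cancel_right hdisj
  · intro i hi hi0
    have hil : i < l₀.length := by simpa using hi
    have hgi : (l₀.map (· \ σ))[i] = l₀[i] \ σ := List.getElem_map _
    have hu_mem : l₀[i] ∈ l₀ := List.getElem_mem hil
    have hul : l₀[i] ∈ l ∧ σ ⊆ l₀[i] := (hl₀mem _).1 hu_mem
    have hpl : List.idxOf l₀[i] l < l.length := List.idxOf_lt_length_iff.2 hul.1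
    set p : ℕ := List.idxOf l₀[i] l with hpd
    have hlp : l[p] = l₀[i] := List.getElem_idxOf hpl
    have hTake : l₀.take i = (l.take p).filter b := by
      refine take_filter_eq hnd hpl ?_ hil (by rw [hlp])
      rw [hlp, hb]; exact decide_eq_true hul.2
    have hR : ∀ s, s ∈ l₀.take i ↔ s ∈ l.take p ∧ σ ⊆ s := by
      intro s; rw [hTake]; simp [List.mem_filter, hb]
    have hp0 : 0 < p := by
      rcases Nat.eq_zero_or_pos p with h0 | h0
      · exfalso
        have hm : l₀[0]'(by omega) ∈ l₀.take i := getElem_zero_mem_take l₀ hil hi0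
        have := (hR _).1 hm
        rw [h0] at this
        simp at this
      · exact h0
    have hY := hpure p hpl hp0
    rw [hlp] at hY
    set u : Finset V := l₀[i] with hud
    set Y : Set (Finset V) := {t | ∃ s ∈ l.take p, t ⊆ s} ∩ {t | t ⊆ u} with hYd
    constructor
    · refine ⟨∅, ⟨⟨l₀[0]'(by omega) \ σ, ?_, Finset.empty_subset _⟩, Finset.empty_subset _⟩⟩
      rw [← List.map_take]
      exact List.mem_map.2 ⟨_, getElem_zero_mem_take l₀ hil hi0, rfl⟩
    · intro t ht
      obtain ⟨⟨s', hs'mem, hts'⟩, hti⟩ := ht.1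
      rw [← List.map_take] at hs'mem
      obtain ⟨v, hv, rfl⟩ := List.mem_map.1 hs'mem
      have hvtp : v ∈ l.take p ∧ σ ⊆ v := (hR v).1 hv
      rw [hgi] at hti
      have hdisjt : t ⊆ u ∧ Disjoint t σ := Finset.subset_sdiff.1 hti
      have htY : t ∪ σ ∈ Y := by
        refine ⟨⟨v, hvtp.1, ?_⟩, ?_⟩
        · exact Finset.union_subset (hts'.trans (Finset.sdiff_subset)) hvtp.2
        · exact Finset.union_subset hdisjt.1 hul.2
      obtain ⟨w, hw1, hw2⟩ := exists_facet_above Y htY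
      have hwcard : (w.card : ℤ) = (u.card : ℤ) - 1 := by
        have := hY.2 w hw2; linarith
      have hσw : σ ⊆ w := Finset.subset_union_right.trans hw1
      obtain ⟨⟨s₂, hs₂, hws₂⟩, hwu⟩ := hw2.1
      have hσs₂ : σ ⊆ s₂ := hσw.trans hws₂
      have hs₂t : s₂ ∈ l₀.take i := (hR _).2 ⟨hs₂, hσs₂⟩
      have hwX : w \ σ ∈ ({t | ∃ s ∈ (l₀.map (· \ σ)).take i, t ⊆ s} ∩
          {t | t ⊆ (l₀.map (· \ σ))[i]} : Set (Finset V)) := by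
        refine ⟨⟨s₂ \ σ, ?_, Finset.sdiff_subset_sdiff hws₂ (le_refl _)⟩, ?_⟩
        · rw [← List.map_take]
          exact List.mem_map.2 ⟨s₂, hs₂t, rfl⟩
        · rw [hgi]
          exact Finset.sdiff_subset_sdiff hwu (le_refl _)
      have htw : t ⊆ w \ σ :=
        Finset.subset_sdiff.2 ⟨Finset.subset_union_left.trans hw1, hdisjt.2⟩
      have hteq : t = w \ σ := ht.2 _ hwX htw
      have hc1 : ((w \ σ).card : ℤ) = (w.card : ℤ) - σ.card := Finset.cast_card_sdiff hσw
      have hc2 : ((u \ σ).card : ℤ) = (u.card : ℤ) - σ.card := Finset.cast_card_sdiff hul.2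
      rw [hgi, hteq]
      rw [hc1, hc2, hwcard]
      ring

lemma shellable_transfer [DecidableEq V] [DecidableEq W] [Fintype W]
    (Γ : Set (Finset V)) (Δ : Set (Finset W)) (φ : V → W) (ψ : W → V)
    (hψφ : ∀ v, ψ (φ v) = v)
    (hmem : ∀ s : Finset V, s ∈ Γ ↔ s.image φ ∈ Δ)
    (hsurj : ∀ t ∈ Δ, (t.image ψ).image φ = t)
    (h : Shellable Δ) : Shellable Γ := by
  classical
  have hΨΦ : ∀ s : Finset V, (s.image φ).image ψ = s := by
    intro s
    rw [Finset.image_image]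
    have hid : (ψ ∘ φ) = id := funext hψφ
    rw [hid, Finset.image_id]
  have hrange : ∀ t ∈ Δ, ∀ x ∈ t, φ (ψ x) = x := by
    intro t ht x hx
    have hx' : x ∈ (t.image ψ).image φ := by rw [hsurj t ht]; exact hx
    obtain ⟨a, ha, rfl⟩ := Finset.mem_image.1 hx'
    obtain ⟨c, _, rfl⟩ := Finset.mem_image.1 ha
    rw [hψφ]
  have hinjΨ : ∀ t ∈ Δ, ∀ w : Finset W, w ⊆ t → (w.image ψ).card = w.card := by
    intro t ht w hwt
    apply Finset.card_image_of_injOn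
    intro x hx y hy hxy
    rw [← hrange t ht x (hwt hx), ← hrange t ht y (hwt hy), hxy]
  obtain ⟨l, hnd, hmeml, hpure⟩ := h
  have hlΔ : ∀ t ∈ l, t ∈ Δ := fun t htl => ((hmeml t).1 htl).1
  have fc1 : ∀ t, IsFacet Δ t → IsFacet Γ (t.image ψ) := by
    intro t ht
    constructor
    · rw [hmem, hsurj t ht.1]; exact ht.1
    · intro s hs hsub
      have h1 : t ⊆ s.image φ := by
        rw [← hsurj t ht.1]
        exact Finset.image_subset_image hsub
      have h2 : t = s.image φ := ht.2 _ ((hmem s).1 hs) h1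
      rw [h2, hΨΦ]
  have fc2 : ∀ s, IsFacet Γ s → ∃ t, IsFacet Δ t ∧ t.image ψ = s := by
    intro s hs
    obtain ⟨u, hu1, hu2⟩ := exists_facet_above Δ ((hmem s).1 hs.1)
    have h1 : s ⊆ u.image ψ := by
      rw [← hΨΦ s]
      exact Finset.image_subset_image hu1
    have h2 : u.image ψ ∈ Γ := by rw [hmem, hsurj u hu2.1]; exact hu2.1
    exact ⟨u, hu2, (hs.2 _ h2 h1).symm⟩
  refine ⟨l.map (·.image ψ), ?_, ?_, ?_⟩
  · refine List.Nodup.map_on ?_ hnd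
    intro x hx y hy hxy
    rw [← hsurj x (hlΔ x hx), ← hsurj y (hlΔ y hy), hxy]
  · intro s
    constructor
    · intro hs
      obtain ⟨t, htl, rfl⟩ := List.mem_map.1 hs
      exact fc1 t ((hmeml t).1 htl)
    · intro hs
      obtain ⟨t, ht, rfl⟩ := fc2 s hs
      exact List.mem_map.2 ⟨t, (hmeml t).2 ht, rfl⟩
  · intro i hi hi0
    have hil : i < l.length := by simpa using hi
    have hgi : (l.map (·.image ψ))[i] = l[i].image ψ := List.getElem_map _
    have hliΔ : l[i] ∈ Δ := hlΔ _ (List.getElem_mem hil)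
    constructor
    · refine ⟨∅, ⟨⟨(l.map (·.image ψ))[0]'(by omega), ?_, Finset.empty_subset _⟩,
        Finset.empty_subset _⟩⟩
      exact getElem_zero_mem_take _ (by simpa using hil) hi0
    · intro t ht
      obtain ⟨⟨s', hs'mem, hts'⟩, hti⟩ := ht.1
      rw [← List.map_take] at hs'mem
      obtain ⟨v, hv, rfl⟩ := List.mem_map.1 hs'mem
      have hvl : v ∈ l := List.mem_of_mem_take hv
      have hvΔ : v ∈ Δ := hlΔ v hvl
      have hΦt1 : t.image φ ⊆ v := by
        have h5 := Finset.image_subset_image (f := φ) hts'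
        rwa [hsurj v hvΔ] at h5
      rw [hgi] at hti
      have hΦt2 : t.image φ ⊆ l[i] := by
        have h5 := Finset.image_subset_image (f := φ) hti
        rwa [hsurj _ hliΔ] at h5
      have htX : t.image φ ∈ ({t | ∃ s ∈ l.take i, t ⊆ s} ∩ {t | t ⊆ l[i]} : Set (Finset W)) :=
        ⟨⟨v, hv, hΦt1⟩, hΦt2⟩
      obtain ⟨w, hw1, hw2⟩ := exists_facet_above _ htX
      have hwcard : (w.card : ℤ) = (l[i].card : ℤ) - 1 := by
        have h6 := (hpure i hil hi0).2 w hw2; linarith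
      obtain ⟨⟨s₂, hs₂, hws₂⟩, hwi⟩ := hw2.1
      have hΨwX : w.image ψ ∈ ({t | ∃ s ∈ (l.map (·.image ψ)).take i, t ⊆ s} ∩
          {t | t ⊆ (l.map (·.image ψ))[i]} : Set (Finset V)) := by
        refine ⟨⟨s₂.image ψ, ?_, Finset.image_subset_image hws₂⟩, ?_⟩
        · rw [← List.map_take]
          exact List.mem_map.2 ⟨s₂, hs₂, rfl⟩
        · rw [hgi]
          exact Finset.image_subset_image hwi
      have htw : t ⊆ w.image ψ := by
        rw [← hΨΦ t]
        exact Finset.image_subset_image hw1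
      have hteq : t = w.image ψ := ht.2 _ hΨwX htw
      rw [hgi, hteq, hinjΨ _ hliΔ w hwi, hinjΨ _ hliΔ l[i] (le_refl _)]
      linarith

end ShellAux

section BCAux

variable {E : Type*} [Fintype E] [DecidableEq E]

set_option linter.unusedSectionVars false

/-- The vertex map sending a flat of the contraction to the corresponding flat of `f`. -/
def bcPhi (F : Finset E) (G : Finset {x // x ∉ F}) : Finset E := G.image Subtype.val ∪ F

/-- The inverse vertex map. -/
def bcPsi (F : Finset E) (G' : Finset E) : Finset {x // x ∉ F} := G'.subtype (· ∉ F)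

lemma bcPsiPhi (F : Finset E) (G : Finset {x // x ∉ F}) :
    (bcPhi F G).subtype (· ∉ F) = G := by
  ext ⟨x, hx⟩
  simp only [bcPhi, Finset.mem_subtype, Finset.mem_union, Finset.mem_image, Subtype.exists]
  constructor
  · rintro (⟨a, ha, haG, rfl⟩ | hxF)
    · exact haG
    · exact absurd hxF hx
  · intro hxG
    exact Or.inl ⟨x, hx, hxG, rfl⟩

lemma bcPsiPhi' (F : Finset E) (G : Finset {x // x ∉ F}) : bcPsi F (bcPhi F G) = G :=
  bcPsiPhi F G

lemma bcSubsetPhi (F : Finset E) (G : Finset {x // x ∉ F}) : F ⊆ bcPhi F G :=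
  Finset.subset_union_right

lemma bcPhiPsi (F : Finset E) {G' : Finset E} (h : F ⊆ G') : bcPhi F (bcPsi F G') = G' := by
  ext x
  by_cases hx : x ∈ F
  · simp only [bcPhi, Finset.mem_union]
    exact ⟨fun _ => h hx, fun _ => Or.inr hx⟩
  · simp only [bcPhi, bcPsi, Finset.mem_union, Finset.mem_image, Finset.mem_subtype,
      Subtype.exists]
    constructor
    · rintro (⟨a, ha, haG, rfl⟩ | hxF)
      · exact haG
      · exact absurd hxF hx
    · intro hxG
      exact Or.inl ⟨x, hx, hxG, rfl⟩

lemma bcPhiMono (F : Finset E) {G₁ G₂ : Finset {x // x ∉ F}} :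
    bcPhi F G₁ ⊆ bcPhi F G₂ ↔ G₁ ⊆ G₂ := by
  constructor
  · intro h x hx
    have h1 : (x : E) ∈ bcPhi F G₁ := Finset.mem_union_left _ (Finset.mem_image_of_mem _ hx)
    rcases Finset.mem_union.1 (h h1) with h3 | h3
    · obtain ⟨y, hy, hxy⟩ := Finset.mem_image.1 h3
      exact Subtype.ext hxy ▸ hy
    · exact absurd h3 x.2
  · intro h
    exact Finset.union_subset_union_left (Finset.image_subset_image h)

lemma bcPhiEqF (F : Finset E) {G : Finset {x // x ∉ F}} : bcPhi F G = F ↔ G = ∅ := by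
  constructor
  · intro h
    rw [Finset.eq_empty_iff_forall_notMem]
    intro x hx
    have h1 : (x : E) ∈ bcPhi F G :=
      Finset.mem_union_left _ (Finset.mem_image_of_mem _ hx)
    rw [h] at h1
    exact x.2 h1
  · rintro rfl
    simp [bcPhi]

lemma bcPhiUniv (F : Finset E) {G : Finset {x // x ∉ F}} :
    bcPhi F G = Finset.univ ↔ G = Finset.univ := by
  constructor
  · intro h
    rw [Finset.eq_univ_iff_forall]
    intro x
    have hx : (x : E) ∈ bcPhi F G := h ▸ Finset.mem_univ _
    rcases Finset.mem_union.1 hx with h3 | h3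
    · obtain ⟨y, hy, hxy⟩ := Finset.mem_image.1 h3
      exact Subtype.ext hxy ▸ hy
    · exact absurd h3 x.2
  · rintro rfl
    rw [Finset.eq_univ_iff_forall]
    intro x
    by_cases hx : x ∈ F
    · exact Finset.mem_union_right _ hx
    · exact Finset.mem_union_left _ (Finset.mem_image.2 ⟨⟨x, hx⟩, Finset.mem_univ _, rfl⟩)

lemma bcContractCl (f : ClosureOp E) (F : Finset E) (G : Finset {x // x ∉ F}) :
    (f.contract F).cl G = (f.cl (bcPhi F G)).subtype (· ∉ F) := rfl

lemma bcContract_cl_empty (f : ClosureOp E) {F : Finset E} (hFcl : f.cl F = F) :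
    (f.contract F).cl ∅ = ∅ := by
  rw [bcContractCl]
  have h1 : bcPhi F (∅ : Finset {x // x ∉ F}) = F := by simp [bcPhi]
  rw [h1, hFcl]
  ext ⟨x, hx⟩
  simp [Finset.mem_subtype, hx]

lemma bcFlatPhi (f : ClosureOp E) {F : Finset E} {G : Finset {x // x ∉ F}}
    (h : (f.contract F).cl G = G) : f.cl (bcPhi F G) = bcPhi F G := by
  rw [bcContractCl] at h
  apply Finset.Subset.antisymm
  · intro x hx
    by_cases hxF : x ∈ F
    · exact Finset.mem_union_right _ hxF
    · have h2 : (⟨x, hxF⟩ : {x // x ∉ F}) ∈ G := by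
        rw [← h, Finset.mem_subtype]
        exact hx
      exact Finset.mem_union_left _ (Finset.mem_image.2 ⟨_, h2, rfl⟩)
  · exact f.subset_cl _

lemma bcFlatPsi (f : ClosureOp E) {F : Finset E} {G : Finset {x // x ∉ F}}
    (h : f.cl (bcPhi F G) = bcPhi F G) : (f.contract F).cl G = G := by
  rw [bcContractCl, h]
  exact bcPsiPhi F G

end BCAux

/-- If the Bergman complex `Δ(f)` of a closure operator is shellable,
then for every proper flat `F` the Bergman complex `Δ(f/F)` of the contraction is
shellable. -/
theorem bergman_contract_shellable
    {E : Type*} [Fintype E] [DecidableEq E] (f : ClosureOp E)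
    (h : Shellable f.bergman) :
    ∀ F : Finset E, f.IsProperFlat F → Shellable ((f.contract F).bergman) := by
  classical
  intro F hF
  obtain ⟨hFcl, hFuniv⟩ := hF
  have hcl0F : f.cl ∅ ⊆ F := by
    have h1 := f.cl_mono (Finset.empty_subset F)
    rwa [hFcl] at h1
  -- a maximal chain `σ` of flats in the interval `(f.cl ∅, F]`
  set P : Set (Finset E) := {G | f.cl G = G ∧ f.cl ∅ ⊂ G ∧ G ⊆ F} with hP
  set S : Set (Finset (Finset E)) :=
    {τ | (∀ H ∈ τ, H ∈ P) ∧ (∀ H₁ ∈ τ, ∀ H₂ ∈ τ, H₁ ⊆ H₂ ∨ H₂ ⊆ H₁) ∧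
      (f.cl ∅ ⊂ F → F ∈ τ)} with hSdef
  have hS0 : (if f.cl ∅ ⊂ F then ({F} : Finset (Finset E)) else ∅) ∈ S := by
    split_ifs with hcase
    · refine ⟨?_, ?_, fun _ => Finset.mem_singleton_self F⟩
      · intro H hH
        rw [Finset.mem_singleton] at hH
        subst hH
        exact ⟨hFcl, hcase, le_refl _⟩
      · intro H₁ h₁ H₂ h₂
        rw [Finset.mem_singleton] at h₁ h₂
        subst h₁; subst h₂
        exact Or.inl (le_refl _)
    · exact ⟨fun H hH => absurd hH (Finset.notMem_empty H),
        fun H hH => absurd hH (Finset.notMem_empty H),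
        fun hc => absurd hc hcase⟩
  obtain ⟨σ, hσS, hσmax⟩ := Finset.exists_max_image (Set.toFinite S).toFinset Finset.card
    ⟨_, (Set.Finite.mem_toFinset _).2 hS0⟩
  rw [Set.Finite.mem_toFinset] at hσS
  obtain ⟨hσP, hσchain, hσF⟩ := hσS
  have hσmax' : ∀ G, G ∈ P → (∀ H ∈ σ, G ⊆ H ∨ H ⊆ G) → G ∈ σ := by
    intro G hG hcomp
    by_contra hGσ
    have hins : insert G σ ∈ S := by
      refine ⟨?_, ?_, fun hc => Finset.mem_insert_of_mem (hσF hc)⟩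
      · intro H hH
        rcases Finset.mem_insert.1 hH with rfl | hH'
        · exact hG
        · exact hσP H hH'
      · intro H₁ h₁ H₂ h₂
        rcases Finset.mem_insert.1 h₁ with rfl | h₁' <;>
          rcases Finset.mem_insert.1 h₂ with rfl | h₂'
        · exact Or.inl (le_refl _)
        · exact hcomp _ h₂'
        · exact (hcomp _ h₁').symm
        · exact hσchain _ h₁' _ h₂'
    have hcard := hσmax _ ((Set.Finite.mem_toFinset _).2 hins)
    rw [Finset.card_insert_of_notMem hGσ] at hcard
    omega
  -- the link of `σ` inside the Bergman complex of `f`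
  set Λ : Set (Finset (Finset E)) :=
    {t : Finset (Finset E) | Disjoint t σ ∧ t ∪ σ ∈ f.bergman} with hΛdef
  have hvert : ∀ t ∈ Λ, ∀ G' ∈ t, (f.IsProperFlat G' ∧ f.cl ∅ ⊂ G') ∧ F ⊂ G' := by
    intro t ht G' hG't
    obtain ⟨hdisj, hb⟩ := ht
    obtain ⟨hb1, hb2⟩ := hb
    have hv := hb1 G' (Finset.mem_union_left _ hG't)
    refine ⟨hv, ?_⟩
    by_cases heq : f.cl ∅ = F
    · rw [← heq]
      exact hv.2
    · have hc : f.cl ∅ ⊂ F := Finset.ssubset_iff_subset_ne.2 ⟨hcl0F, heq⟩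
      have hFσ := hσF hc
      have hG'σ : G' ∉ σ := Finset.disjoint_left.1 hdisj hG't
      rcases hb2 G' (Finset.mem_union_left _ hG't) F (Finset.mem_union_right _ hFσ) with
        hsub | hsub
      · exfalso
        have hG'P : G' ∈ P := ⟨hv.1.1, hv.2, hsub⟩
        exact hG'σ (hσmax' G' hG'P (fun H hH =>
          hb2 G' (Finset.mem_union_left _ hG't) H (Finset.mem_union_right _ hH)))
      · exact Finset.ssubset_iff_subset_ne.2 ⟨hsub, fun hEq => hG'σ (hEq ▸ hFσ)⟩
  have hmemΛ : ∀ C : Finset (Finset {x // x ∉ F}),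
      C ∈ (f.contract F).bergman ↔ C.image (bcPhi F) ∈ Λ := by
    intro C
    constructor
    · intro hC
      obtain ⟨hC1, hC2⟩ := hC
      have hkey : ∀ G ∈ C, f.cl (bcPhi F G) = bcPhi F G ∧ F ⊂ bcPhi F G ∧
          bcPhi F G ≠ Finset.univ := by
        intro G hG
        obtain ⟨⟨hGfl, hGuniv⟩, hGne⟩ := hC1 G hG
        refine ⟨bcFlatPhi f hGfl, ?_, ?_⟩
        · refine Finset.ssubset_iff_subset_ne.2 ⟨bcSubsetPhi F G, ?_⟩
          intro hEq
          have hG0 : G = ∅ := (bcPhiEqF F).1 hEq.symm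
          rw [bcContract_cl_empty f hFcl, hG0] at hGne
          exact (Finset.ssubset_iff_subset_ne.1 hGne).2 rfl
        · intro hEq
          exact hGuniv ((bcPhiUniv F).1 hEq)
      refine ⟨?_, ?_, ?_⟩
      · rw [Finset.disjoint_left]
        intro a ha haσ
        obtain ⟨G, hG, rfl⟩ := Finset.mem_image.1 ha
        obtain ⟨_, hlt, _⟩ := hkey G hG
        exact (Finset.ssubset_iff_subset_ne.1 hlt).2
          (Finset.Subset.antisymm (Finset.ssubset_iff_subset_ne.1 hlt).1
            (hσP _ haσ).2.2)
      · intro H hH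
        rcases Finset.mem_union.1 hH with hH' | hH'
        · obtain ⟨G, hG, rfl⟩ := Finset.mem_image.1 hH'
          obtain ⟨hfl, hlt, hnu⟩ := hkey G hG
          exact ⟨⟨hfl, hnu⟩, Finset.ssubset_of_subset_of_ssubset hcl0F hlt⟩
        · have hP' := hσP H hH'
          refine ⟨⟨hP'.1, ?_⟩, hP'.2.1⟩
          intro hEq
          exact hFuniv (Finset.univ_subset_iff.1 (hEq ▸ hP'.2.2))
      · intro H₁ h₁ H₂ h₂
        rcases Finset.mem_union.1 h₁ with h₁' | h₁' <;>
          rcases Finset.mem_union.1 h₂ with h₂' | h₂'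
        · obtain ⟨G₁, hG₁, rfl⟩ := Finset.mem_image.1 h₁'
          obtain ⟨G₂, hG₂, rfl⟩ := Finset.mem_image.1 h₂'
          rcases hC2 G₁ hG₁ G₂ hG₂ with hc | hc
          · exact Or.inl ((bcPhiMono F).2 hc)
          · exact Or.inr ((bcPhiMono F).2 hc)
        · obtain ⟨G₁, hG₁, rfl⟩ := Finset.mem_image.1 h₁'
          exact Or.inr ((hσP H₂ h₂').2.2.trans (bcSubsetPhi F G₁))
        · obtain ⟨G₂, hG₂, rfl⟩ := Finset.mem_image.1 h₂'
          exact Or.inl ((hσP H₁ h₁').2.2.trans (bcSubsetPhi F G₂))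
        · exact hσchain H₁ h₁' H₂ h₂'
    · intro ht
      refine ⟨?_, ?_⟩
      · intro G hG
        have hv := hvert _ ht _ (Finset.mem_image_of_mem _ hG)
        refine ⟨⟨bcFlatPsi f hv.1.1.1, ?_⟩, ?_⟩
        · intro hEq
          exact hv.1.1.2 ((bcPhiUniv F).2 hEq)
        · rw [bcContract_cl_empty f hFcl, Finset.empty_ssubset]
          obtain ⟨x, hxG', hxF⟩ := Finset.exists_of_ssubset hv.2
          rcases Finset.mem_union.1 hxG' with hx | hx
          · obtain ⟨y, hy, _⟩ := Finset.mem_image.1 hx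
            exact ⟨y, hy⟩
          · exact absurd hx hxF
      · intro G₁ h₁ G₂ h₂
        obtain ⟨_, hb2⟩ := ht.2
        rcases hb2 _ (Finset.mem_union_left _ (Finset.mem_image_of_mem _ h₁))
          _ (Finset.mem_union_left _ (Finset.mem_image_of_mem _ h₂)) with hc | hc
        · exact Or.inl ((bcPhiMono F).1 hc)
        · exact Or.inr ((bcPhiMono F).1 hc)
  have hsurjΛ : ∀ t ∈ Λ, (t.image (bcPsi F)).image (bcPhi F) = t := by
    intro t ht
    rw [Finset.image_image]
    have h1 : ∀ G' ∈ t, (bcPhi F ∘ bcPsi F) G' = G' := fun G' hG' =>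
      bcPhiPsi F ((hvert t ht G' hG').2).subset
    calc t.image (bcPhi F ∘ bcPsi F) = t.image id := Finset.image_congr h1
      _ = t := Finset.image_id
  exact shellable_transfer _ Λ (bcPhi F) (bcPsi F) (bcPsiPhi' F) hmemΛ hsurjΛ
    (shellable_link f.bergman σ h)
end
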